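/- arXiv:2109.00144 — 7 statements merged into one kernel-verified Lean document; each statement's English description precedes it below -/
import Mathlib

section
/- Let a > b > 0, A = (a+b)/2, B = (a−b)/2. Let u : ℝ² → ℝ be twice continuously differentiable and define f(r,θ) = u((A·r + B/r)·cos θ, (A·r − B/r)·sin θ). Then for every r > 0 and every θ ∈ ℝ: ∂²f/∂r²(r,θ) + (1/r)·∂f/∂r(r,θ) + (1/r²)·∂²f/∂θ²(r,θ) = [(A − B/r²)² + (a²−b²)·sin²θ/r²] · (∂²u/∂w² + ∂²u/∂z²)((A·r + B/r)·cos θ, (A·r − B/r)·sin θ). -/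
/-!
In complex notation `ghizzetti A B r θ` is the Joukowski-type map `ζ ↦ A ζ + B / ζ` at
`ζ = r e^{iθ}`. Being holomorphic, it satisfies the polar Cauchy–Riemann equations
`∂_θ G = r · J ∂_r G` (`J` the rotation by `π/2`), and its components are harmonic, i.e.
`∂_r² G + r⁻¹ ∂_r G + r⁻² ∂_θ² G = 0`. By the chain rule, the polar Laplacian of `u ∘ G` is
`D²u(∂_r G, ∂_r G) + r⁻² D²u(∂_θ G, ∂_θ G) + Du(∂_r² G + r⁻¹ ∂_r G + r⁻² ∂_θ² G)`: harmonicity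
kills the last term, and since `∂_r G` and `J ∂_r G` are orthogonal of equal length the first two
add up to `|∂_r G|² Δu`, where `|∂_r G|² = |A - B / ζ²|² = (A - B / r²)² + 4AB sin² θ / r²`.
-/

open Real Topology

section

variable {E F : Type*} [NormedAddCommGroup E] [NormedSpace ℝ E]
  [NormedAddCommGroup F] [NormedSpace ℝ F]

theorem deriv_deriv_comp_eq {u : E → F} (hu : ContDiff ℝ 2 u) {γ v : ℝ → E} {t : ℝ} {a : E}
    (hγ : ∀ᶠ s in 𝓝 t, HasDerivAt γ (v s) s) (hv : HasDerivAt v a t) :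
    deriv (fun s => deriv (fun s' => u (γ s')) s) t
      = fderiv ℝ (fderiv ℝ u) (γ t) (v t) (v t) + fderiv ℝ u (γ t) a := by
  have hu' : Differentiable ℝ (fderiv ℝ u) :=
    (hu.fderiv_right (m := 1) le_rfl).differentiable one_ne_zero
  have hfirst : (fun s => deriv (fun s' => u (γ s')) s) =ᶠ[𝓝 t]
      fun s => fderiv ℝ u (γ s) (v s) := hγ.mono fun s hs =>
    ((hu.differentiable two_ne_zero _).hasFDerivAt.comp_hasDerivAt s hs).deriv
  rw [hfirst.deriv_eq]
  exact (((hu' (γ t)).hasFDerivAt.comp_hasDerivAt t hγ.self_of_nhds).clm_apply hv).deriv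

theorem deriv_deriv_comp_prodMk_left {u : ℝ × ℝ → F} (hu : ContDiff ℝ 2 u) (x y : ℝ) :
    deriv (fun w => deriv (fun w' => u (w', y)) w) x
      = fderiv ℝ (fderiv ℝ u) (x, y) (1, 0) (1, 0) := by
  simpa using deriv_deriv_comp_eq hu (v := fun _ => ((1 : ℝ), (0 : ℝ)))
    (.of_forall fun w => (hasDerivAt_id w).prodMk (hasDerivAt_const w y)) (hasDerivAt_const x _)

theorem deriv_deriv_comp_prodMk_right {u : ℝ × ℝ → F} (hu : ContDiff ℝ 2 u) (x y : ℝ) :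
    deriv (fun z => deriv (fun z' => u (x, z')) z) y
      = fderiv ℝ (fderiv ℝ u) (x, y) (0, 1) (0, 1) := by
  simpa using deriv_deriv_comp_eq hu (v := fun _ => ((0 : ℝ), (1 : ℝ)))
    (.of_forall fun z => (hasDerivAt_const z x).prodMk (hasDerivAt_id z)) (hasDerivAt_const y _)

theorem ContinuousLinearMap.apply_prod_eq (L : ℝ × ℝ →L[ℝ] F) (x y : ℝ) :
    L (x, y) = x • L (1, 0) + y • L (0, 1) := by
  rw [← map_smul, ← map_smul, ← map_add]
  simp

theorem ContinuousLinearMap.apply_self_add_apply_rotate_self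
    (T : ℝ × ℝ →L[ℝ] ℝ × ℝ →L[ℝ] F) (p q : ℝ) :
    T (p, q) (p, q) + T (-q, p) (-q, p)
      = (p ^ 2 + q ^ 2) • (T (1, 0) (1, 0) + T (0, 1) (0, 1)) := by
  have expand : ∀ x y : ℝ, T (x, y) (x, y) = x ^ 2 • T (1, 0) (1, 0)
      + (x * y) • (T (1, 0) (0, 1) + T (0, 1) (1, 0)) + y ^ 2 • T (0, 1) (0, 1) := fun x y => by
    rw [T.apply_prod_eq, add_apply, smul_apply, smul_apply, (T (1, 0)).apply_prod_eq,
      (T (0, 1)).apply_prod_eq]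
    module
  rw [expand p q, expand (-q) p]
  module

end

noncomputable def ghizzetti (A B r θ : ℝ) : ℝ × ℝ :=
  ((A * r + B / r) * cos θ, (A * r - B / r) * sin θ)

section Ghizzetti

variable (A B : ℝ) {r : ℝ}

theorem hasDerivAt_ghizzetti_radial (θ : ℝ) (hr : r ≠ 0) :
    HasDerivAt (ghizzetti A B · θ) ((A - B / r ^ 2) * cos θ, (A + B / r ^ 2) * sin θ) r := by
  have hinv := (hasDerivAt_inv hr).const_mul B
  refine (((hasDerivAt_id r).const_mul A).add hinv |>.mul_const _).prodMk
    (((hasDerivAt_id r).const_mul A).sub hinv |>.mul_const _) |>.congr_deriv ?_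
  simp only [Prod.mk.injEq]
  constructor <;> ring

theorem hasDerivAt_ghizzetti_radial_deriv (θ : ℝ) (hr : r ≠ 0) :
    HasDerivAt (fun r' => ((A - B / r' ^ 2) * cos θ, (A + B / r' ^ 2) * sin θ))
      ((2 * B / r ^ 3) • (cos θ, -sin θ)) r := by
  have hinv := ((hasDerivAt_pow 2 r).inv (pow_ne_zero 2 hr)).const_mul B
  refine ((hinv.const_sub A).mul_const _).prodMk ((hinv.const_add A).mul_const _) |>.congr_deriv ?_
  simp only [Prod.smul_mk, smul_eq_mul, Prod.mk.injEq, Nat.cast_ofNat]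
  constructor <;> field_simp <;> ring

theorem hasDerivAt_ghizzetti_angular (r θ : ℝ) (hr : r ≠ 0) :
    HasDerivAt (ghizzetti A B r ·)
      (r • (-((A + B / r ^ 2) * sin θ), (A - B / r ^ 2) * cos θ)) θ := by
  refine ((hasDerivAt_cos θ).const_mul _).prodMk ((hasDerivAt_sin θ).const_mul _) |>.congr_deriv ?_
  simp only [Prod.smul_mk, smul_eq_mul, Prod.mk.injEq]
  constructor <;> field_simp

theorem hasDerivAt_ghizzetti_angular_deriv (r θ : ℝ) (hr : r ≠ 0) :
    HasDerivAt (fun θ' => r • (-((A + B / r ^ 2) * sin θ'), (A - B / r ^ 2) * cos θ'))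
      (-ghizzetti A B r θ) θ := by
  refine (((hasDerivAt_sin θ).const_mul _).neg.prodMk ((hasDerivAt_cos θ).const_mul _)).const_smul r
    |>.congr_deriv ?_
  simp only [ghizzetti, Prod.smul_mk, Prod.neg_mk, smul_eq_mul, Prod.mk.injEq]
  constructor <;> field_simp

/-- The chain-rule expansion of the polar Laplacian of `u ∘ ghizzetti A B`, with `T = D²u` and
`L = Du` at the image point. -/
theorem polar_laplacian_ghizzetti_eq {F : Type*} [NormedAddCommGroup F] [NormedSpace ℝ F]
    (T : ℝ × ℝ →L[ℝ] ℝ × ℝ →L[ℝ] F) (L : ℝ × ℝ →L[ℝ] F) (θ : ℝ) (hr : r ≠ 0) :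
    T ((A - B / r ^ 2) * cos θ, (A + B / r ^ 2) * sin θ)
        ((A - B / r ^ 2) * cos θ, (A + B / r ^ 2) * sin θ)
      + L ((2 * B / r ^ 3) • (cos θ, -sin θ))
      + (1 / r) • L ((A - B / r ^ 2) * cos θ, (A + B / r ^ 2) * sin θ)
      + (1 / r ^ 2) • (T (r • (-((A + B / r ^ 2) * sin θ), (A - B / r ^ 2) * cos θ))
          (r • (-((A + B / r ^ 2) * sin θ), (A - B / r ^ 2) * cos θ))
        + L (-ghizzetti A B r θ))
    = ((A - B / r ^ 2) ^ 2 + 4 * A * B * sin θ ^ 2 / r ^ 2)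
      • (T (1, 0) (1, 0) + T (0, 1) (0, 1)) := by
  set p := (A - B / r ^ 2) * cos θ
  set q := (A + B / r ^ 2) * sin θ
  have harmonic : (2 * B / r ^ 3) • (cos θ, -sin θ) + (1 / r) • (p, q)
      + (1 / r ^ 2) • -ghizzetti A B r θ = 0 := by
    simp only [ghizzetti, p, q, Prod.smul_mk, Prod.neg_mk, Prod.mk_add_mk, smul_eq_mul,
      Prod.mk_eq_zero]
    constructor <;> field_simp <;> ring
  have hL : L ((2 * B / r ^ 3) • (cos θ, -sin θ)) + (1 / r) • L (p, q)
      + (1 / r ^ 2) • L (-ghizzetti A B r θ) = 0 := by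
    simpa only [map_add, map_smul, map_zero] using congrArg L harmonic
  have hT : (1 / r ^ 2) • T (r • (-q, p)) (r • (-q, p)) = T (-q, p) (-q, p) := by
    rw [map_smul, map_smul, smul_apply, smul_smul, smul_smul]
    field_simp
    exact one_smul ℝ _
  have hnorm : p ^ 2 + q ^ 2 = (A - B / r ^ 2) ^ 2 + 4 * A * B * sin θ ^ 2 / r ^ 2 := by
    simp only [p, q]
    field_simp
    linear_combination (A * r ^ 2 - B) ^ 2 * cos_sq_add_sin_sq θ
  rw [← hnorm, ← T.apply_self_add_apply_rotate_self, ← hT]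
  linear_combination (norm := module) hL

end Ghizzetti

theorem ghizzetti_laplacian_transform_general
    (a b : ℝ)
    (A B : ℝ) (hA : A = (a + b) / 2) (hB : B = (a - b) / 2)
    (u : ℝ × ℝ → ℝ) (hu : ContDiff ℝ 2 u)
    (f : ℝ → ℝ → ℝ)
    (hf : ∀ r θ : ℝ, f r θ =
      u ((A * r + B / r) * Real.cos θ, (A * r - B / r) * Real.sin θ))
    (r θ : ℝ) (hr : 0 < r) :
    deriv (fun r' => deriv (fun r'' => f r'' θ) r') r
      + (1 / r) * deriv (fun r' => f r' θ) r
      + (1 / r ^ 2) * deriv (fun θ' => deriv (fun θ'' => f r θ'') θ') θ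
    = ((A - B / r ^ 2) ^ 2 + (a ^ 2 - b ^ 2) * Real.sin θ ^ 2 / r ^ 2)
      * (deriv (fun w => deriv (fun w' =>
            u (w', (A * r - B / r) * Real.sin θ)) w) ((A * r + B / r) * Real.cos θ)
        + deriv (fun z => deriv (fun z' =>
            u ((A * r + B / r) * Real.cos θ, z')) z) ((A * r - B / r) * Real.sin θ)) := by
  obtain rfl : f = fun r θ => u (ghizzetti A B r θ) := funext₂ hf
  have hr₀ : r ≠ 0 := hr.ne'
  have hrad : deriv (fun r' => u (ghizzetti A B r' θ)) r
      = fderiv ℝ u (ghizzetti A B r θ) ((A - B / r ^ 2) * cos θ, (A + B / r ^ 2) * sin θ) :=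
    ((hu.differentiable two_ne_zero _).hasFDerivAt.comp_hasDerivAt r
      (hasDerivAt_ghizzetti_radial A B θ hr₀)).deriv
  have hrad₂ := deriv_deriv_comp_eq hu
    ((eventually_ne_nhds hr₀).mono fun r' hr' => hasDerivAt_ghizzetti_radial A B θ hr')
    (hasDerivAt_ghizzetti_radial_deriv A B θ hr₀)
  have hang₂ := deriv_deriv_comp_eq hu
    (.of_forall fun θ' => hasDerivAt_ghizzetti_angular A B r θ' hr₀)
    (hasDerivAt_ghizzetti_angular_deriv A B r θ hr₀)
  have hsq : a ^ 2 - b ^ 2 = 4 * A * B := by rw [hA, hB]; ring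
  beta_reduce
  rw [hrad₂, hrad, hang₂, deriv_deriv_comp_prodMk_left hu, deriv_deriv_comp_prodMk_right hu, hsq]
  exact polar_laplacian_ghizzetti_eq A B _ _ θ hr₀

/-- under the Ghizzetti map `(r,θ) ↦ ((Ar + B/r)cos θ, (Ar - B/r)sin θ)`
the polar-type operator corresponds to the Laplacian via the conformal factor
`(A - B/r²)² + (a²-b²)sin²θ / r²`. -/
theorem ghizzetti_laplacian_transform
    (a b : ℝ) (hb : 0 < b) (hab : b < a)
    (A B : ℝ) (hA : A = (a + b) / 2) (hB : B = (a - b) / 2)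
    (u : ℝ × ℝ → ℝ) (hu : ContDiff ℝ 2 u)
    (f : ℝ → ℝ → ℝ)
    (hf : ∀ r θ : ℝ, f r θ =
      u ((A * r + B / r) * Real.cos θ, (A * r - B / r) * Real.sin θ))
    (r θ : ℝ) (hr : 0 < r) :
    deriv (fun r' => deriv (fun r'' => f r'' θ) r') r
      + (1 / r) * deriv (fun r' => f r' θ) r
      + (1 / r ^ 2) * deriv (fun θ' => deriv (fun θ'' => f r θ'') θ') θ
    = ((A - B / r ^ 2) ^ 2 + (a ^ 2 - b ^ 2) * Real.sin θ ^ 2 / r ^ 2)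
      * (deriv (fun w => deriv (fun w' =>
            u (w', (A * r - B / r) * Real.sin θ)) w) ((A * r + B / r) * Real.cos θ)
        + deriv (fun z => deriv (fun z' =>
            u ((A * r + B / r) * Real.cos θ, z')) z) ((A * r - B / r) * Real.sin θ)) :=
  ghizzetti_laplacian_transform_general a b A B hA hB u hu f hf r θ hr
end

section
/- Let 0 < q < 1 and let h : ℝ → ℝ be 2π-periodic and integrable on [0,2π]. Set A₀ = (1/π)·∫₀^{2π} h(τ) dτ, and for each k ≥ 1 set A_k = (1/(π(1+q^(2k))))·∫₀^{2π} h(τ)·cos(kτ) dτ and B_k = (1/(π(1−q^(2k))))·∫₀^{2π} h(τ)·sin(kτ) dτ. Define f(r,θ) = A₀/2 + ∑_{k=1}^∞ [A_k·(r^k + q^(2k)·r^(−k))·cos(kθ) + B_k·(r^k − q^(2k)·r^(−k))·sin(kθ)]. Then f satisfies the polar Laplace equation ∂²f/∂r² + (1/r)·∂f/∂r + (1/r²)·∂²f/∂θ² = 0 at every point (r,θ) with q² < r < 1 and θ ∈ ℝ. -/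
/-!
Each summand is harmonic on its own. In `r` it is a combination `α r ^ n + β r ^ (-n)`, and
`r ^ (±n)` solve Euler's equation `R'' + R' / r = n² R / r²`; in `θ` it is a combination of
`cos (n θ)` and `sin (n θ)`, which satisfy `Θ'' = -n² Θ`. The coefficients are bounded,
`|A n|, |B n| ≤ (∫ |h|) / (π (1 - q²))`, so on a window `q² < a ≤ r ≤ b < 1` the first two
derivatives of the `n`-th summand are `O(n² (b ^ n + (q² / a) ^ n))`, a summable majorant; hence
the series may be differentiated termwise twice in `r` and in `θ`.
-/

open Real Filter Topology

theorem hasDerivAt_mul_zpow_add_mul_zpow (α β : ℝ) (p p' : ℤ) {y : ℝ} (hy : y ≠ 0) :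
    HasDerivAt (fun z => α * z ^ p + β * z ^ p')
      (α * p * y ^ (p - 1) + β * p' * y ^ (p' - 1)) y := by
  refine (((hasDerivAt_zpow p y (.inl hy)).const_mul α).add
    ((hasDerivAt_zpow p' y (.inl hy)).const_mul β)).congr_deriv ?_
  ring

theorem hasDerivAt_mul_cos_add_mul_sin (P Q ν θ : ℝ) :
    HasDerivAt (fun t => P * cos (ν * t) + Q * sin (ν * t))
      (Q * ν * cos (ν * θ) + -(P * ν) * sin (ν * θ)) θ := by
  have hν : HasDerivAt (fun t => ν * t) ν θ := by simpa using (hasDerivAt_id θ).const_mul ν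
  refine ((hν.cos.const_mul P).add (hν.sin.const_mul Q)).congr_deriv ?_
  ring

theorem hasSum_derivs_tsum_of_isPreconnected {g g' g'' : ℕ → ℝ → ℝ} {u v : ℕ → ℝ}
    {U : Set ℝ} {x₀ x : ℝ} (hU : IsOpen U) (hU' : IsPreconnected U)
    (hu : Summable u) (hv : Summable v)
    (hg : ∀ k, ∀ y ∈ U, HasDerivAt (g k) (g' k y) y)
    (hg' : ∀ k, ∀ y ∈ U, HasDerivAt (g' k) (g'' k y) y)
    (hgu : ∀ k, ∀ y ∈ U, ‖g' k y‖ ≤ u k) (hgv : ∀ k, ∀ y ∈ U, ‖g'' k y‖ ≤ v k)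
    (hx₀ : x₀ ∈ U) (hgx₀ : Summable fun k => g k x₀) (hx : x ∈ U) :
    HasSum (fun k => g' k x) (deriv (fun y => ∑' k, g k y) x) ∧
      HasSum (fun k => g'' k x) (deriv (fun y => deriv (fun z => ∑' k, g k z) y) x) := by
  have hD : ∀ y ∈ U, HasDerivAt (fun z => ∑' k, g k z) (∑' k, g' k y) y := fun y hy =>
    hasDerivAt_tsum_of_isPreconnected hu hU hU' hg hgu hx₀ hgx₀ hy
  have hg'x₀ : Summable fun k => g' k x₀ := .of_norm_bounded hu fun k => hgu k x₀ hx₀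
  have hDD := hasDerivAt_tsum_of_isPreconnected hv hU hU' hg' hgv hx₀ hg'x₀ hx
  have hderiv :
      (fun y => deriv (fun z => ∑' k, g k z) y) =ᶠ[𝓝 x] fun y => ∑' k, g' k y := by
    filter_upwards [hU.mem_nhds hx] with y hy using (hD y hy).deriv
  constructor
  · rw [(hD x hx).deriv]
    exact (Summable.of_norm_bounded hu fun k => hgu k x hx).hasSum
  · rw [hderiv.deriv_eq, hDD.deriv]
    exact (Summable.of_norm_bounded hv fun k => hgv k x hx).hasSum

theorem summable_sq_mul_geometric_succ {ρ : ℝ} (h0 : 0 ≤ ρ) (h1 : ρ < 1) :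
    Summable fun k : ℕ => ((k : ℝ) + 1) ^ 2 * ρ ^ (k + 1) := by
  have hρ : ‖ρ‖ < 1 := by rwa [norm_of_nonneg h0]
  have := (summable_nat_add_iff 1 (f := fun n : ℕ => (n : ℝ) ^ 2 * ρ ^ n)).mpr
    (summable_pow_mul_geometric_of_norm_lt_one 2 hρ)
  simpa only [Nat.cast_add, Nat.cast_one] using this

theorem zpow_le_pow_div_pow {a b z : ℝ} (ha : 0 < a) (haz : a ≤ z) (hzb : z ≤ b)
    {n j : ℕ} {p : ℤ} (hp : p = n - j) : z ^ p ≤ b ^ n / a ^ j := by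
  have hz : 0 < z := ha.trans_le haz
  rw [hp, zpow_sub₀ hz.ne', zpow_natCast, zpow_natCast]
  have := hz.le.trans hzb
  gcongr

theorem pow_mul_zpow_le_div_pow {a c z : ℝ} (hc : 0 ≤ c) (ha : 0 < a) (haz : a ≤ z)
    {n j : ℕ} {p : ℤ} (hp : p = -n - j) : c ^ n * z ^ p ≤ (c / a) ^ n / a ^ j := by
  have hz : 0 < z := ha.trans_le haz
  rw [hp, zpow_sub₀ hz.ne', zpow_neg, zpow_natCast, zpow_natCast, div_pow]
  calc c ^ n * ((z ^ n)⁻¹ / z ^ j) = c ^ n / z ^ n / z ^ j := by ring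
    _ ≤ c ^ n / a ^ n / a ^ j := by gcongr

theorem abs_mul_zpow_add_mul_zpow_le {α β s t K c a b z : ℝ} {n j : ℕ} {p p' : ℤ}
    (hα : |α| ≤ K) (hβ : |β| ≤ K * c ^ n) (hs : |s| ≤ 2 * n ^ 2) (ht : |t| ≤ 2 * n ^ 2)
    (hc : 0 ≤ c) (ha : 0 < a) (haz : a ≤ z) (hzb : z ≤ b) (hp : p = n - j)
    (hp' : p' = -n - j) :
    |α * s * z ^ p + β * t * z ^ p'| ≤ 2 * K / a ^ j * (n ^ 2 * (b ^ n + (c / a) ^ n)) := by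
  have hz : 0 < z := ha.trans_le haz
  have hzp := zpow_le_pow_div_pow ha haz hzb hp
  have hzp' := pow_mul_zpow_le_div_pow hc ha haz hp'
  have hαs : |α * s| ≤ K * (2 * n ^ 2) := by
    rw [abs_mul]; exact mul_le_mul hα hs (abs_nonneg _) ((abs_nonneg _).trans hα)
  have hβt : |β * t| ≤ K * (2 * n ^ 2) * c ^ n := by
    rw [abs_mul, mul_right_comm]
    exact mul_le_mul hβ ht (abs_nonneg _) ((abs_nonneg _).trans hβ)
  have hK : 0 ≤ K * (2 * n ^ 2) := (abs_nonneg _).trans hαs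
  have hαsz : |α * s| * z ^ p ≤ K * (2 * n ^ 2) * (b ^ n / a ^ j) :=
    mul_le_mul hαs hzp (zpow_pos hz _).le hK
  have hβtz : |β * t| * z ^ p' ≤ K * (2 * n ^ 2) * ((c / a) ^ n / a ^ j) :=
    calc |β * t| * z ^ p' ≤ K * (2 * n ^ 2) * c ^ n * z ^ p' :=
          mul_le_mul_of_nonneg_right hβt (zpow_pos hz _).le
      _ = K * (2 * n ^ 2) * (c ^ n * z ^ p') := mul_assoc _ _ _
      _ ≤ K * (2 * n ^ 2) * ((c / a) ^ n / a ^ j) := mul_le_mul_of_nonneg_left hzp' hK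
  calc |α * s * z ^ p + β * t * z ^ p'|
      ≤ |α * s * z ^ p| + |β * t * z ^ p'| := abs_add_le _ _
    _ = |α * s| * z ^ p + |β * t| * z ^ p' := by
        rw [abs_mul (α * s), abs_mul (β * t), abs_of_pos (zpow_pos hz p),
          abs_of_pos (zpow_pos hz p')]
    _ ≤ K * (2 * n ^ 2) * (b ^ n / a ^ j) + K * (2 * n ^ 2) * ((c / a) ^ n / a ^ j) :=
        add_le_add hαsz hβtz
    _ = 2 * K / a ^ j * (n ^ 2 * (b ^ n + (c / a) ^ n)) := by ring

theorem abs_mul_cos_add_mul_sin_le {P Q w x x' : ℝ} (hP : |P| ≤ w) (hQ : |Q| ≤ w) :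
    |P * cos x + Q * sin x'| ≤ 2 * w := by
  have hPc : |P * cos x| ≤ w := by
    rw [abs_mul]; exact (mul_le_of_le_one_right (abs_nonneg P) (abs_cos_le_one x)).trans hP
  have hQs : |Q * sin x'| ≤ w := by
    rw [abs_mul]; exact (mul_le_of_le_one_right (abs_nonneg Q) (abs_sin_le_one x')).trans hQ
  linarith [abs_add_le (P * cos x) (Q * sin x')]

theorem abs_mul_cos_sub_mul_sin_le {P Q w x x' : ℝ} (hP : |P| ≤ w) (hQ : |Q| ≤ w) :
    |P * cos x - Q * sin x'| ≤ 2 * w := by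
  rw [sub_eq_add_neg, ← neg_mul]
  exact abs_mul_cos_add_mul_sin_le hP (by rwa [abs_neg])

theorem hasSum_derivs_laurentSeries {α β : ℕ → ℝ} {K c y : ℝ} (hα : ∀ k, |α k| ≤ K)
    (hβ : ∀ k, |β k| ≤ K * c ^ (k + 1)) (hc : 0 ≤ c) (hcy : c < y) (hy : y < 1) :
    HasSum (fun k => α k * ((k : ℝ) + 1) * y ^ (k : ℤ)
          + β k * (-((k : ℝ) + 1)) * y ^ (-(k : ℤ) - 2))
        (deriv (fun x => ∑' k, (α k * x ^ ((k : ℤ) + 1) + β k * x ^ (-((k : ℤ) + 1)))) y) ∧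
      HasSum (fun k => α k * (((k : ℝ) + 1) * k) * y ^ ((k : ℤ) - 1)
          + β k * (((k : ℝ) + 1) * ((k : ℝ) + 2)) * y ^ (-(k : ℤ) - 3))
        (deriv (fun x => deriv
          (fun x => ∑' k, (α k * x ^ ((k : ℤ) + 1) + β k * x ^ (-((k : ℤ) + 1)))) x) y) := by
  obtain ⟨a, b, hca, hay, hyb, hb1⟩ : ∃ a b, c < a ∧ a < y ∧ y < b ∧ b < 1 :=
    ⟨(c + y) / 2, (y + 1) / 2, by linarith, by linarith, by linarith, by linarith⟩
  have ha : 0 < a := hc.trans_lt hca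
  have hμ : Summable fun k : ℕ =>
      ((k + 1 : ℕ) : ℝ) ^ 2 * (b ^ (k + 1) + (c / a) ^ (k + 1)) := by
    have hb := summable_sq_mul_geometric_succ (ha.trans (hay.trans hyb)).le hb1
    have hca := summable_sq_mul_geometric_succ (div_nonneg hc ha.le) ((div_lt_one ha).2 hca)
    simpa only [Nat.cast_add, Nat.cast_one, mul_add] using hb.add hca
  refine hasSum_derivs_tsum_of_isPreconnected
    (g := fun k x => α k * x ^ ((k : ℤ) + 1) + β k * x ^ (-((k : ℤ) + 1)))
    (g' := fun k x => α k * ((k : ℝ) + 1) * x ^ (k : ℤ)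
      + β k * (-((k : ℝ) + 1)) * x ^ (-(k : ℤ) - 2))
    (g'' := fun k x => α k * (((k : ℝ) + 1) * k) * x ^ ((k : ℤ) - 1)
      + β k * (((k : ℝ) + 1) * ((k : ℝ) + 2)) * x ^ (-(k : ℤ) - 3))
    isOpen_Ioo isPreconnected_Ioo (hμ.mul_left (2 * K / a ^ 1)) (hμ.mul_left (2 * K / a ^ 2))
    ?_ ?_ ?_ ?_ ⟨hay, hyb⟩ ?_ ⟨hay, hyb⟩
  · intro k z hz
    refine (hasDerivAt_mul_zpow_add_mul_zpow _ _ _ _ (ha.trans hz.1).ne').congr_deriv ?_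
    rw [show (k : ℤ) + 1 - 1 = k by ring, show -((k : ℤ) + 1) - 1 = -(k : ℤ) - 2 by ring]
    push_cast
    ring
  · intro k z hz
    refine (hasDerivAt_mul_zpow_add_mul_zpow _ _ _ _ (ha.trans hz.1).ne').congr_deriv ?_
    rw [show -(k : ℤ) - 2 - 1 = -(k : ℤ) - 3 by ring]
    push_cast
    ring
  · intro k z hz
    rw [Real.norm_eq_abs]
    refine abs_mul_zpow_add_mul_zpow_le (n := k + 1) (j := 1) (hα k) (hβ k) ?_ ?_ hc ha
      hz.1.le hz.2.le      (by push_cast; ring) (by push_cast; ring)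
    · push_cast; rw [abs_of_nonneg (by positivity)]; nlinarith
    · push_cast; rw [abs_neg, abs_of_nonneg (by positivity)]; nlinarith
  · intro k z hz
    rw [Real.norm_eq_abs]
    refine abs_mul_zpow_add_mul_zpow_le (n := k + 1) (j := 2) (hα k) (hβ k) ?_ ?_ hc ha
      hz.1.le hz.2.le      (by push_cast; ring) (by push_cast; ring)
    · push_cast; rw [abs_of_nonneg (by positivity)]; nlinarith
    · push_cast; rw [abs_of_nonneg (by positivity)]; nlinarith
  · refine .of_norm_bounded (hμ.mul_left (2 * K / a ^ 0)) fun k => ?_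
    rw [Real.norm_eq_abs, ← mul_one (α k), ← mul_one (β k)]
    refine abs_mul_zpow_add_mul_zpow_le (n := k + 1) (j := 0) (hα k) (hβ k) ?_ ?_ hc ha
      hay.le hyb.le      (by push_cast; ring) (by push_cast; ring)
    all_goals push_cast; rw [abs_one]; nlinarith [(k.cast_nonneg : (0 : ℝ) ≤ k)]

theorem hasSum_deriv_deriv_trigSeries {P Q w : ℕ → ℝ} (hP : ∀ k, |P k| ≤ w k)
    (hQ : ∀ k, |Q k| ≤ w k) (hw : Summable fun k : ℕ => ((k : ℝ) + 1) ^ 2 * w k) (θ : ℝ) :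
    HasSum (fun k : ℕ => -((k : ℝ) + 1) ^ 2 *
        (P k * cos (((k : ℝ) + 1) * θ) + Q k * sin (((k : ℝ) + 1) * θ)))
      (deriv (fun t => deriv
        (fun t => ∑' k, (P k * cos (((k : ℝ) + 1) * t) + Q k * sin (((k : ℝ) + 1) * t)))
        t) θ) := by
  have hscale : ∀ (k : ℕ) (X : ℝ), |X| ≤ w k →
      |X| ≤ ((k : ℝ) + 1) ^ 2 * w k ∧ |X * ((k : ℝ) + 1)| ≤ ((k : ℝ) + 1) ^ 2 * w k ∧
        |X * ((k : ℝ) + 1) * ((k : ℝ) + 1)| ≤ ((k : ℝ) + 1) ^ 2 * w k := fun k X hX => by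
    have hν : (1 : ℝ) ≤ k + 1 := by simp
    have hX' := mul_le_mul_of_nonneg_right hX (zero_le_one.trans hν)
    have hw0 := (abs_nonneg X).trans hX
    simp only [abs_mul, abs_of_nonneg (zero_le_one.trans hν)]
    have h1 := mul_nonneg hw0 (sub_nonneg.2 hν)
    have h2 := mul_nonneg h1 (zero_le_one.trans hν)
    refine ⟨?_, ?_, ?_⟩ <;> nlinarith
  have h := hasSum_derivs_tsum_of_isPreconnected
    (g := fun k t => P k * cos (((k : ℝ) + 1) * t) + Q k * sin (((k : ℝ) + 1) * t))
    (g' := fun k t => Q k * ((k : ℝ) + 1) * cos (((k : ℝ) + 1) * t)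
      + -(P k * ((k : ℝ) + 1)) * sin (((k : ℝ) + 1) * t))
    (g'' := fun k t => -(P k * ((k : ℝ) + 1)) * ((k : ℝ) + 1) * cos (((k : ℝ) + 1) * t)
      + -(Q k * ((k : ℝ) + 1) * ((k : ℝ) + 1)) * sin (((k : ℝ) + 1) * t))
    isOpen_univ isPreconnected_univ (hw.mul_left 2) (hw.mul_left 2)
    (fun k t _ => hasDerivAt_mul_cos_add_mul_sin _ _ _ t)
    (fun k t _ => hasDerivAt_mul_cos_add_mul_sin _ _ _ t)
    (fun k t _ => abs_mul_cos_add_mul_sin_le (hscale k _ (hQ k)).2.1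
      (by rw [abs_neg]; exact (hscale k _ (hP k)).2.1))
    (fun k t _ => abs_mul_cos_add_mul_sin_le
      (by rw [neg_mul, abs_neg]; exact (hscale k _ (hP k)).2.2)
      (by rw [abs_neg]; exact (hscale k _ (hQ k)).2.2))
    (Set.mem_univ θ)
    (.of_norm_bounded (hw.mul_left 2) fun k =>
      abs_mul_cos_add_mul_sin_le (hscale k _ (hP k)).1 (hscale k _ (hQ k)).1)
    (Set.mem_univ θ)
  convert h.2 using 1
  funext k
  ring

theorem laurent_euler_eq (α β : ℝ) (k : ℕ) {r : ℝ} (hr : r ≠ 0) :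
    α * (((k : ℝ) + 1) * k) * r ^ ((k : ℤ) - 1)
        + β * (((k : ℝ) + 1) * ((k : ℝ) + 2)) * r ^ (-(k : ℤ) - 3)
      + 1 / r * (α * ((k : ℝ) + 1) * r ^ (k : ℤ)
        + β * (-((k : ℝ) + 1)) * r ^ (-(k : ℤ) - 2)) =
      ((k : ℝ) + 1) ^ 2 / r ^ 2 * (α * r ^ ((k : ℤ) + 1) + β * r ^ (-((k : ℤ) + 1))) := by
  simp only [zpow_sub₀ hr, zpow_add₀ hr, zpow_neg, zpow_natCast, zpow_ofNat]
  field_simp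
  ring

theorem abs_integral_mul_le_integral_abs {h g : ℝ → ℝ} {a b : ℝ} (hab : a ≤ b)
    (hh : IntervalIntegrable h MeasureTheory.volume a b) (hg : Continuous g)
    (hg1 : ∀ x, |g x| ≤ 1) :
    |∫ x in a..b, h x * g x| ≤ ∫ x in a..b, |h x| := by
  refine (intervalIntegral.abs_integral_le_integral_abs hab).trans <|
    intervalIntegral.integral_mono_on hab (hh.mul_continuousOn hg.continuousOn).abs hh.abs
      fun x _ => ?_
  rw [abs_mul]
  exact mul_le_of_le_one_right (abs_nonneg _) (hg1 x)

theorem abs_one_div_pi_mul_le {c d X Y : ℝ} (hd : 0 < d) (hdc : d ≤ c) (hX : |X| ≤ Y) :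
    |1 / (π * c) * X| ≤ Y / (π * d) := by
  have hc : 0 < c := hd.trans_le hdc
  rw [abs_mul, abs_of_pos (by positivity), one_div_mul_eq_div]
  exact div_le_div₀ ((abs_nonneg X).trans hX) hX (by positivity) (by gcongr)

theorem exists_abs_coeff_le {q : ℝ} (hq0 : 0 < q) (hq1 : q < 1) {h : ℝ → ℝ}
    (hint : IntervalIntegrable h MeasureTheory.volume 0 (2 * π)) {A B : ℕ → ℝ}
    (hA : ∀ k : ℕ, 1 ≤ k → A k =
      (1 / (π * (1 + q ^ (2 * k)))) * ∫ τ in (0 : ℝ)..(2 * π), h τ * Real.cos (k * τ))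
    (hB : ∀ k : ℕ, 1 ≤ k → B k =
      (1 / (π * (1 - q ^ (2 * k)))) * ∫ τ in (0 : ℝ)..(2 * π), h τ * Real.sin (k * τ)) :
    ∃ M, ∀ k : ℕ, |A (k + 1)| ≤ M ∧ |B (k + 1)| ≤ M := by
  have h2π : (0 : ℝ) ≤ 2 * π := by positivity
  have hq2 : 0 < 1 - q ^ 2 := by nlinarith
  refine ⟨(∫ τ in (0 : ℝ)..(2 * π), |h τ|) / (π * (1 - q ^ 2)), fun k => ⟨?_, ?_⟩⟩
  · rw [hA (k + 1) k.succ_pos]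
    have hqk : 0 ≤ q ^ (2 * (k + 1)) := by positivity
    exact abs_one_div_pi_mul_le hq2 (by linarith [sq_nonneg q])
      (abs_integral_mul_le_integral_abs h2π hint (by fun_prop) fun x => abs_cos_le_one _)
  · rw [hB (k + 1) k.succ_pos]
    have hqk : q ^ (2 * (k + 1)) ≤ q ^ 2 :=
      pow_le_pow_of_le_one hq0.le hq1.le (by omega)
    exact abs_one_div_pi_mul_le hq2 (by linarith)
      (abs_integral_mul_le_integral_abs h2π hint (by fun_prop) fun x => abs_sin_le_one _)

noncomputable def annulusMode (A B : ℕ → ℝ) (q : ℝ) (k : ℕ) (r θ : ℝ) : ℝ :=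
  A (k + 1) * (r ^ (k + 1) + q ^ (2 * (k + 1)) * r ^ (-((k : ℤ) + 1)))
      * cos (((k : ℝ) + 1) * θ)
    + B (k + 1) * (r ^ (k + 1) - q ^ (2 * (k + 1)) * r ^ (-((k : ℤ) + 1)))
      * sin (((k : ℝ) + 1) * θ)

theorem annulusMode_eq_laurent (A B : ℕ → ℝ) (q : ℝ) (k : ℕ) (r θ : ℝ) :
    annulusMode A B q k r θ =
      (A (k + 1) * cos (((k : ℝ) + 1) * θ) + B (k + 1) * sin (((k : ℝ) + 1) * θ))
          * r ^ ((k : ℤ) + 1)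
        + q ^ (2 * (k + 1)) * (A (k + 1) * cos (((k : ℝ) + 1) * θ)
          - B (k + 1) * sin (((k : ℝ) + 1) * θ)) * r ^ (-((k : ℤ) + 1)) := by
  rw [annulusMode, ← zpow_natCast]
  push_cast
  ring

theorem hasSum_radialLaplacian_tsum_annulusMode {A B : ℕ → ℝ} {M q r : ℝ}
    (hM : ∀ k : ℕ, |A (k + 1)| ≤ M ∧ |B (k + 1)| ≤ M) (hr1 : q ^ 2 < r) (hr2 : r < 1)
    (θ : ℝ) :
    HasSum (fun k : ℕ => ((k : ℝ) + 1) ^ 2 / r ^ 2 * annulusMode A B q k r θ)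
      (deriv (fun y => deriv (fun y => ∑' k, annulusMode A B q k y θ) y) r
        + 1 / r * deriv (fun y => ∑' k, annulusMode A B q k y θ) r) := by
  simp only [annulusMode_eq_laurent]
  obtain ⟨hD, hDD⟩ := hasSum_derivs_laurentSeries (K := 2 * M)
    (α := fun k => A (k + 1) * cos (((k : ℝ) + 1) * θ)
      + B (k + 1) * sin (((k : ℝ) + 1) * θ))
    (β := fun k => q ^ (2 * (k + 1)) * (A (k + 1) * cos (((k : ℝ) + 1) * θ)
      - B (k + 1) * sin (((k : ℝ) + 1) * θ)))
    (fun k => abs_mul_cos_add_mul_sin_le (hM k).1 (hM k).2)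
    (fun k => by
      rw [abs_mul, pow_mul, abs_of_nonneg (pow_nonneg (sq_nonneg q) _), mul_comm]
      exact mul_le_mul_of_nonneg_right (abs_mul_cos_sub_mul_sin_le (hM k).1 (hM k).2)
        (by positivity))
    (sq_nonneg q) hr1 hr2
  convert hDD.add (hD.mul_left (1 / r)) using 1
  funext k
  exact (laurent_euler_eq _ _ k ((sq_nonneg q).trans_lt hr1).ne').symm

theorem hasSum_deriv_deriv_tsum_annulusMode {A B : ℕ → ℝ} {M q r : ℝ}
    (hM : ∀ k : ℕ, |A (k + 1)| ≤ M ∧ |B (k + 1)| ≤ M) (hr1 : q ^ 2 < r) (hr2 : r < 1)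
    (θ : ℝ) :
    HasSum (fun k : ℕ => -((k : ℝ) + 1) ^ 2 * annulusMode A B q k r θ)
      (deriv (fun t => deriv (fun t => ∑' k, annulusMode A B q k r t) t) θ) := by
  have hr : 0 < r := (sq_nonneg q).trans_lt hr1
  have hqr : ∀ k : ℕ, q ^ (2 * (k + 1)) * r ^ (-((k : ℤ) + 1)) = (q ^ 2 / r) ^ (k + 1) := by
    intro k
    have hr' : r ^ (-((k : ℤ) + 1)) = (r ^ (k + 1))⁻¹ := by rw [zpow_neg]; norm_cast
    rw [hr', div_pow, ← pow_mul, div_eq_mul_inv]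
  have hpow : ∀ k : ℕ,
      |r ^ (k + 1)| + |(q ^ 2 / r) ^ (k + 1)| = r ^ (k + 1) + (q ^ 2 / r) ^ (k + 1) := fun k => by
    rw [abs_of_nonneg (by positivity), abs_of_nonneg (by positivity)]
  refine hasSum_deriv_deriv_trigSeries
    (w := fun k => M * (r ^ (k + 1) + (q ^ 2 / r) ^ (k + 1))) (fun k => ?_) (fun k => ?_) ?_ θ
  · rw [hqr, abs_mul]
    exact mul_le_mul (hM k).1 ((abs_add_le _ _).trans_eq (hpow k)) (abs_nonneg _)
      ((abs_nonneg _).trans (hM k).1)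
  · rw [hqr, abs_mul]
    exact mul_le_mul (hM k).2 ((abs_sub _ _).trans_eq (hpow k)) (abs_nonneg _)
      ((abs_nonneg _).trans (hM k).1)
  · have hr' := summable_sq_mul_geometric_succ hr.le hr2
    have hqr' := summable_sq_mul_geometric_succ (div_nonneg (sq_nonneg q) hr.le)
      ((div_lt_one hr).2 hr1)
    refine ((hr'.add hqr').mul_left M).congr fun k => ?_
    ring

theorem annulus_series_harmonic_general
    (q : ℝ) (hq0 : 0 < q) (hq1 : q < 1)
    (h : ℝ → ℝ)
    (hint : IntervalIntegrable h MeasureTheory.volume 0 (2 * π))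
    (A B : ℕ → ℝ)
    (hA : ∀ k : ℕ, 1 ≤ k → A k =
      (1 / (π * (1 + q ^ (2 * k)))) * ∫ τ in (0 : ℝ)..(2 * π), h τ * Real.cos (k * τ))
    (hB : ∀ k : ℕ, 1 ≤ k → B k =
      (1 / (π * (1 - q ^ (2 * k)))) * ∫ τ in (0 : ℝ)..(2 * π), h τ * Real.sin (k * τ))
    (f : ℝ → ℝ → ℝ)
    (hf : ∀ r θ : ℝ, f r θ = A 0 / 2 + ∑' k : ℕ,
      (A (k + 1) * (r ^ (k + 1) + q ^ (2 * (k + 1)) * r ^ (-((k : ℤ) + 1)))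
          * Real.cos (((k : ℝ) + 1) * θ)
        + B (k + 1) * (r ^ (k + 1) - q ^ (2 * (k + 1)) * r ^ (-((k : ℤ) + 1)))
          * Real.sin (((k : ℝ) + 1) * θ)))
    (r θ : ℝ) (hr1 : q ^ 2 < r) (hr2 : r < 1) :
    deriv (fun r' => deriv (fun r'' => f r'' θ) r') r
      + (1 / r) * deriv (fun r' => f r' θ) r
      + (1 / r ^ 2) * deriv (fun θ' => deriv (fun θ'' => f r θ'') θ') θ = 0 := by
  obtain ⟨M, hM⟩ := exists_abs_coeff_le hq0 hq1 hint hA hB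
  have hf' : ∀ r θ, f r θ = A 0 / 2 + ∑' k, annulusMode A B q k r θ := hf
  simp only [hf', deriv_const_add']
  refine ((hasSum_radialLaplacian_tsum_annulusMode hM hr1 hr2 θ).add
    ((hasSum_deriv_deriv_tsum_annulusMode hM hr1 hr2 θ).mul_left (1 / r ^ 2))).unique ?_
  convert hasSum_zero with k
  ring

/-- the Fourier series solution of the Dirichlet problem in the
annulus satisfies the polar Laplace equation for `q² < r < 1`. -/
theorem annulus_series_harmonic
    (q : ℝ) (hq0 : 0 < q) (hq1 : q < 1)
    (h : ℝ → ℝ) (hper : Function.Periodic h (2 * π))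
    (hint : IntervalIntegrable h MeasureTheory.volume 0 (2 * π))
    (A B : ℕ → ℝ)
    (hA0 : A 0 = (1 / π) * ∫ τ in (0 : ℝ)..(2 * π), h τ)
    (hA : ∀ k : ℕ, 1 ≤ k → A k =
      (1 / (π * (1 + q ^ (2 * k)))) * ∫ τ in (0 : ℝ)..(2 * π), h τ * Real.cos (k * τ))
    (hB : ∀ k : ℕ, 1 ≤ k → B k =
      (1 / (π * (1 - q ^ (2 * k)))) * ∫ τ in (0 : ℝ)..(2 * π), h τ * Real.sin (k * τ))
    (f : ℝ → ℝ → ℝ)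
    (hf : ∀ r θ : ℝ, f r θ = A 0 / 2 + ∑' k : ℕ,
      (A (k + 1) * (r ^ (k + 1) + q ^ (2 * (k + 1)) * r ^ (-((k : ℤ) + 1)))
          * Real.cos (((k : ℝ) + 1) * θ)
        + B (k + 1) * (r ^ (k + 1) - q ^ (2 * (k + 1)) * r ^ (-((k : ℤ) + 1)))
          * Real.sin (((k : ℝ) + 1) * θ)))
    (r θ : ℝ) (hr1 : q ^ 2 < r) (hr2 : r < 1) :
    deriv (fun r' => deriv (fun r'' => f r'' θ) r') r
      + (1 / r) * deriv (fun r' => f r' θ) r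
      + (1 / r ^ 2) * deriv (fun θ' => deriv (fun θ'' => f r θ'') θ') θ = 0 :=
  annulus_series_harmonic_general q hq0 hq1 h hint A B hA hB f hf r θ hr1 hr2
end

section
/- Let 0 < q < 1 and let h : ℝ → ℝ be 2π-periodic and integrable on [0,2π]. With A₀ = (1/π)·∫₀^{2π} h(τ) dτ, A_k = (1/(π(1+q^(2k))))·∫₀^{2π} h(τ)·cos(kτ) dτ, B_k = (1/(π(1−q^(2k))))·∫₀^{2π} h(τ)·sin(kτ) dτ, and f(r,θ) = A₀/2 + ∑_{k=1}^∞ [A_k·(r^k + q^(2k)·r^(−k))·cos(kθ) + B_k·(r^k − q^(2k)·r^(−k))·sin(kθ)], one has for every θ ∈ ℝ: f(q,θ) = f(q,−θ), and the radial derivative satisfies ∂f/∂r(q,θ) = −∂f/∂r(q,−θ). -/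
open Real

/-- the annulus series solution is even in `θ` on the inner circle
`r = q`, and its radial derivative there is odd in `θ`. -/
theorem annulus_series_symmetry
    (q : ℝ) (hq0 : 0 < q) (hq1 : q < 1)
    (h : ℝ → ℝ) (hper : Function.Periodic h (2 * π))
    (hint : IntervalIntegrable h MeasureTheory.volume 0 (2 * π))
    (A B : ℕ → ℝ)
    (hA0 : A 0 = (1 / π) * ∫ τ in (0 : ℝ)..(2 * π), h τ)
    (hA : ∀ k : ℕ, 1 ≤ k → A k =
      (1 / (π * (1 + q ^ (2 * k)))) * ∫ τ in (0 : ℝ)..(2 * π), h τ * Real.cos (k * τ))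
    (hB : ∀ k : ℕ, 1 ≤ k → B k =
      (1 / (π * (1 - q ^ (2 * k)))) * ∫ τ in (0 : ℝ)..(2 * π), h τ * Real.sin (k * τ))
    (f : ℝ → ℝ → ℝ)
    (hf : ∀ r θ : ℝ, f r θ = A 0 / 2 + ∑' k : ℕ,
      (A (k + 1) * (r ^ (k + 1) + q ^ (2 * (k + 1)) * r ^ (-((k : ℤ) + 1)))
          * Real.cos (((k : ℝ) + 1) * θ)
        + B (k + 1) * (r ^ (k + 1) - q ^ (2 * (k + 1)) * r ^ (-((k : ℤ) + 1)))
          * Real.sin (((k : ℝ) + 1) * θ)))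
    (θ : ℝ) :
    f q θ = f q (-θ)
    ∧ deriv (fun r => f r θ) q = -deriv (fun r => f r (-θ)) q := by
  have hqne : q ≠ 0 := ne_of_gt hq0
  -- key symmetry: f (q^2/r) θ = f r (-θ) for r ≠ 0
  have hkey : ∀ r : ℝ, r ≠ 0 → f (q ^ 2 / r) θ = f r (-θ) := by
    intro r hr
    rw [hf, hf]
    congr 1
    apply tsum_congr
    intro k
    have hz1 : r ^ (-((k : ℤ) + 1)) = (r ^ (k + 1))⁻¹ := by
      rw [show -((k : ℤ) + 1) = -((k + 1 : ℕ) : ℤ) by push_cast; ring,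
        zpow_neg, zpow_natCast]
    have hz2 : (q ^ 2 / r) ^ (-((k : ℤ) + 1)) = ((q ^ 2 / r) ^ (k + 1))⁻¹ := by
      rw [show -((k : ℤ) + 1) = -((k + 1 : ℕ) : ℤ) by push_cast; ring,
        zpow_neg, zpow_natCast]
    rw [hz1, hz2, mul_neg, Real.cos_neg, Real.sin_neg]
    have hq2 : q ^ (2 * (k + 1)) = (q ^ 2) ^ (k + 1) := by rw [pow_mul]
    have hrk : r ^ (k + 1) ≠ 0 := pow_ne_zero _ hr
    have hqk : (q ^ 2 : ℝ) ^ (k + 1) ≠ 0 := pow_ne_zero _ (pow_ne_zero _ hqne)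
    rw [hq2, div_pow]
    field_simp
    ring
  have hfix : q ^ 2 / q = q := by field_simp
  constructor
  · rw [← hkey q hqne, hfix]
  · -- derivative part
    set g : ℝ → ℝ := fun r => f r θ with hg
    have heq : (fun r => f r (-θ)) =ᶠ[nhds q] (fun r => g (q ^ 2 / r)) := by
      filter_upwards [eventually_ne_nhds hqne] with r hr
      exact (hkey r hr).symm
    have hphi : ∀ r : ℝ, r ≠ 0 → q ^ 2 / (q ^ 2 / r) = r := by
      intro r hr; field_simp
    rw [heq.deriv_eq]
    by_cases hd : DifferentiableAt ℝ g q
    · have h1 : DifferentiableAt ℝ (fun r : ℝ => q ^ 2 / r) q :=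
        (differentiableAt_const _).div differentiableAt_id hqne
      have hderiv := deriv_comp q
        (show DifferentiableAt ℝ g ((fun r : ℝ => q ^ 2 / r) q) by
          simp only [hfix]; exact hd) h1
      simp only [Function.comp_def] at hderiv
      have hdphi : deriv (fun r : ℝ => q ^ 2 / r) q = -1 := by
        have hrw : (fun r : ℝ => q ^ 2 / r) = fun r : ℝ => q ^ 2 * r⁻¹ := by
          funext r; rw [div_eq_mul_inv]
        rw [hrw, deriv_const_mul _ (differentiableAt_inv hqne), deriv_inv]
        field_simp
      rw [hderiv, hfix, hdphi]
      ring
    · have hnd : ¬ DifferentiableAt ℝ (fun r => g (q ^ 2 / r)) q := by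
        intro hc
        apply hd
        have hcomp : DifferentiableAt ℝ (fun r => g (q ^ 2 / (q ^ 2 / r))) q := by
          have h1 : DifferentiableAt ℝ (fun r : ℝ => q ^ 2 / r) q :=
            (differentiableAt_const _).div differentiableAt_id hqne
          have hc' : DifferentiableAt ℝ (fun r => g (q ^ 2 / r))
              ((fun r : ℝ => q ^ 2 / r) q) := by
            simp only [hfix]; exact hc
          simpa [Function.comp_def] using DifferentiableAt.comp q hc' h1
        have heq2 : (fun r => g (q ^ 2 / (q ^ 2 / r))) =ᶠ[nhds q] g := by
          filter_upwards [eventually_ne_nhds hqne] with r hr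
          rw [hphi r hr]
        exact (Filter.EventuallyEq.differentiableAt_iff heq2).mp hcomp
      rw [deriv_zero_of_not_differentiableAt hd,
        deriv_zero_of_not_differentiableAt hnd]
      ring
end

section
/- Let 0 < q < 1 and let h : ℝ → ℝ be continuous and 2π-periodic. With A₀ = (1/π)·∫₀^{2π} h(τ) dτ, A_k = (1/(π(1+q^(2k))))·∫₀^{2π} h(τ)·cos(kτ) dτ, B_k = (1/(π(1−q^(2k))))·∫₀^{2π} h(τ)·sin(kτ) dτ, and f(r,θ) = A₀/2 + ∑_{k=1}^∞ [A_k·(r^k + q^(2k)·r^(−k))·cos(kθ) + B_k·(r^k − q^(2k)·r^(−k))·sin(kθ)], one has for every θ ∈ ℝ: f(r,θ) → h(θ) as r → 1 from the left. -/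
/-!
Since `rⁿ ± q²ⁿ r⁻ⁿ = (1 ± q²ⁿ) rⁿ ± q²ⁿ (r⁻ⁿ - rⁿ)`, the series for `f(r, θ)` splits into the
Abel mean `∑ rⁿ (aₙ cos nθ + bₙ sin nθ)` of the Fourier series of `h`, which is the Poisson
integral of `h`, plus a correction whose `n`-th term is `O(qⁿ)` uniformly for `q ≤ r ≤ 1` and
tends to `0` as `r → 1`. The Poisson kernel is an approximate identity, so the Poisson integral
tends to `h θ`, and dominated convergence disposes of the correction.
-/

open Real Filter Topology Set MeasureTheory

noncomputable def diskPoissonKernel (r φ : ℝ) : ℝ := (1 - r ^ 2) / (1 - 2 * r * cos φ + r ^ 2)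

section DiskPoissonKernel

variable {r : ℝ}

lemma diskPoissonKernel_denom_pos (hr : |r| < 1) (φ : ℝ) : 0 < 1 - 2 * r * cos φ + r ^ 2 := by
  have hrcos : r * cos φ ≤ |r| :=
    calc r * cos φ ≤ |r| * |cos φ| := (le_abs_self _).trans_eq (abs_mul r (cos φ))
      _ ≤ |r| := mul_le_of_le_one_right (abs_nonneg r) (abs_cos_le_one φ)
  nlinarith [sq_abs r, sq_nonneg (1 - |r|)]

lemma diskPoissonKernel_nonneg (hr : |r| < 1) (φ : ℝ) : 0 ≤ diskPoissonKernel r φ := by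
  have : r ^ 2 ≤ 1 := by nlinarith [sq_abs r, abs_nonneg r]
  exact div_nonneg (by linarith) (diskPoissonKernel_denom_pos hr φ).le

lemma continuous_diskPoissonKernel (hr : |r| < 1) : Continuous (diskPoissonKernel r) :=
  continuous_const.div (by fun_prop) fun φ => (diskPoissonKernel_denom_pos hr φ).ne'

lemma diskPoissonKernel_periodic : Function.Periodic (diskPoissonKernel r) (2 * π) := by
  intro φ
  simp only [diskPoissonKernel, cos_add_two_pi]

/-- `P_r(φ) - 1 = 2 Re (z / (1 - z))` with `z = r e^{iφ}`, a geometric series. -/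
lemma hasSum_diskPoissonKernel (hr : |r| < 1) (φ : ℝ) :
    HasSum (fun n : ℕ => 2 * r ^ (n + 1) * cos ((n + 1) * φ)) (diskPoissonKernel r φ - 1) := by
  set z : ℂ := r * Complex.exp (φ * Complex.I)
  have hz : ‖z‖ < 1 := by
    rwa [norm_mul, Complex.norm_exp_ofReal_mul_I, mul_one, Complex.norm_real, Real.norm_eq_abs]
  have hre : z.re = r * cos φ := by simp [z, Complex.exp_ofReal_mul_I_re]
  have him : z.im = r * sin φ := by simp [z, Complex.exp_ofReal_mul_I_im]
  have hgeom : HasSum (fun n : ℕ => z ^ (n + 1)) (z / (1 - z)) := by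
    simpa [pow_succ, mul_comm, div_eq_mul_inv] using (hasSum_geometric_of_norm_lt_one hz).mul_left z
  have hpow (n : ℕ) : (z ^ (n + 1)).re = r ^ (n + 1) * cos ((n + 1) * φ) := by
    rw [show z ^ (n + 1) = ((r ^ (n + 1) : ℝ) : ℂ) * Complex.exp (((n + 1) * φ : ℝ) * Complex.I) by
      rw [mul_pow, ← Complex.exp_nat_mul]; push_cast; ring_nf,
      Complex.re_ofReal_mul, Complex.exp_ofReal_mul_I_re]
  have hnormSq : Complex.normSq (1 - z) = 1 - 2 * r * cos φ + r ^ 2 := by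
    rw [Complex.normSq_apply, Complex.sub_re, Complex.sub_im, Complex.one_re, Complex.one_im,
      hre, him]
    nlinarith [sin_sq_add_cos_sq φ]
  have hsum : 2 * (z / (1 - z)).re = diskPoissonKernel r φ - 1 := by
    have hden := diskPoissonKernel_denom_pos hr φ
    rw [Complex.div_re, hnormSq, Complex.sub_re, Complex.sub_im,
      Complex.one_re, Complex.one_im, hre, him, diskPoissonKernel]
    field_simp
    nlinarith [sin_sq_add_cos_sq φ]
  rw [← hsum]
  exact ((Complex.reCLM.hasSum hgeom).mul_left 2).congr_fun fun n => by
    simp only [Complex.reCLM_apply, hpow, mul_assoc]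

lemma diskPoissonKernel_le (hr0 : 1 / 2 ≤ r) (hr1 : r < 1) {φ c : ℝ} (hφ : cos φ ≤ c)
    (hc : c < 1) : diskPoissonKernel r φ ≤ 2 * (1 - r) / (1 - c) := by
  have hden := diskPoissonKernel_denom_pos (abs_lt.2 ⟨by linarith, hr1⟩) φ
  have hD : (1 + r) * (1 - c) ≤ 2 * (1 - 2 * r * cos φ + r ^ 2) := by
    nlinarith [mul_le_mul_of_nonneg_left hφ (by linarith : (0 : ℝ) ≤ 2 * r), sq_nonneg (1 - r)]
  rw [diskPoissonKernel, div_le_div_iff₀ hden (by linarith)]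
  nlinarith [mul_le_mul_of_nonneg_left hD (by linarith : (0 : ℝ) ≤ 1 - r)]

lemma tendstoUniformlyOn_diskPoissonKernel {u : Set ℝ} (hu : IsOpen u) (hu0 : (0 : ℝ) ∈ u) :
    TendstoUniformlyOn diskPoissonKernel 0 (𝓝[<] 1) (Ioc (-π) π \ u) := by
  obtain ⟨δ, hδ, hball⟩ := Metric.isOpen_iff.1 hu 0 hu0
  set c := cos (min δ π)
  have hc : c < 1 := by
    simpa using cos_lt_cos_of_nonneg_of_le_pi le_rfl (min_le_right δ π) (lt_min hδ pi_pos)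
  have hcos : ∀ x ∈ Ioc (-π) π \ u, cos x ≤ c := by
    rintro x ⟨⟨hx1, hx2⟩, hxu⟩
    have hδx : δ ≤ |x| := not_lt.1 fun h => hxu (hball (by simpa using h))
    rw [← cos_abs x]
    exact cos_le_cos_of_nonneg_of_le_pi (by positivity) (abs_le.2 ⟨hx1.le, hx2⟩)
      ((min_le_left δ π).trans hδx)
  have hbound : Tendsto (fun r => 2 * (1 - r) / (1 - c)) (𝓝[<] 1) (𝓝 0) :=
    tendsto_nhdsWithin_of_tendsto_nhds <| by
      simpa using (by fun_prop : Continuous fun r : ℝ => 2 * (1 - r) / (1 - c)).tendsto 1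
  rw [Metric.tendstoUniformlyOn_iff]
  intro ε hε
  filter_upwards [Ioo_mem_nhdsLT (by norm_num : (1 : ℝ) / 2 < 1),
    (tendsto_order.1 hbound).2 ε hε] with r hr hrε x hx
  have hr' : |r| < 1 := abs_lt.2 ⟨by linarith [hr.1], hr.2⟩
  rw [Pi.zero_apply, dist_zero_left, Real.norm_of_nonneg (diskPoissonKernel_nonneg hr' x)]
  exact (diskPoissonKernel_le hr.1.le hr.2 (hcos x hx) hc).trans_lt hrε

lemma integral_mul_comp_sub_of_periodic {g k : ℝ → ℝ} (hg : Function.Periodic g (2 * π))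
    (hk : Function.Periodic k (2 * π)) (θ : ℝ) :
    ∫ τ in 0..2 * π, g τ * k (θ - τ) = ∫ φ in -π..π, g (θ - φ) * k φ := by
  have hper : Function.Periodic (fun τ => g τ * k (θ - τ)) (2 * π) := fun τ => by
    simp only [hg τ, sub_add_eq_sub_sub, hk.sub_eq]
  calc ∫ τ in 0..2 * π, g τ * k (θ - τ)
      = ∫ τ in (θ - π)..(θ - π) + 2 * π, g τ * k (θ - τ) := by
        simpa using hper.intervalIntegral_add_eq 0 (θ - π)
    _ = ∫ φ in -π..π, g (θ - φ) * k φ := by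
        simpa [show θ - π + 2 * π = θ + π by ring] using
          intervalIntegral.integral_comp_sub_left (fun φ => g (θ - φ) * k φ) θ
            (a := θ - π) (b := θ + π)

lemma integral_cos_succ_mul (n : ℕ) : ∫ τ in 0..2 * π, cos ((n + 1) * τ) = 0 := by
  have h := intervalIntegral.mul_integral_comp_mul_left (a := 0) (b := 2 * π) (f := cos)
    ((n : ℝ) + 1)
  rw [integral_cos, mul_zero, sin_zero, sub_zero,
    show ((n : ℝ) + 1) * (2 * π) = ((2 * (n + 1) : ℕ) : ℝ) * π by push_cast; ring,
    sin_nat_mul_pi] at h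
  exact (mul_eq_zero.1 h).resolve_left (by positivity)

lemma integral_sin_succ_mul (n : ℕ) : ∫ τ in 0..2 * π, sin ((n + 1) * τ) = 0 := by
  have h := intervalIntegral.mul_integral_comp_mul_left (a := 0) (b := 2 * π) (f := sin)
    ((n : ℝ) + 1)
  rw [integral_sin, mul_zero, cos_zero,
    show ((n : ℝ) + 1) * (2 * π) = ((n + 1 : ℕ) : ℝ) * (2 * π) by push_cast; ring,
    cos_nat_mul_two_pi, sub_self] at h
  exact (mul_eq_zero.1 h).resolve_left (by positivity)

lemma hasSum_poissonIntegral_fourier {h : ℝ → ℝ} (hh : Continuous h) {r : ℝ} (hr : |r| < 1)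
    (θ : ℝ) :
    HasSum (fun n : ℕ => 2 * r ^ (n + 1) *
        ((∫ τ in 0..2 * π, h τ * cos ((n + 1) * τ)) * cos ((n + 1) * θ)
          + (∫ τ in 0..2 * π, h τ * sin ((n + 1) * τ)) * sin ((n + 1) * θ)))
      ((∫ τ in 0..2 * π, h τ * diskPoissonKernel r (θ - τ)) - ∫ τ in 0..2 * π, h τ) := by
  have hgeom : Summable fun n : ℕ => 2 * |r| ^ (n + 1) :=
    ((summable_nat_add_iff 1).2 (summable_geometric_of_lt_one (abs_nonneg r) hr)).mul_left 2
  have hint := intervalIntegral.hasSum_integral_of_dominated_convergence (ι := ℕ) (μ := volume)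
    (a := 0) (b := 2 * π)
    (F := fun n τ => h τ * (2 * r ^ (n + 1) * cos ((n + 1) * (θ - τ))))
    (f := fun τ => h τ * (diskPoissonKernel r (θ - τ) - 1))
    (fun n τ => |h τ| * (2 * |r| ^ (n + 1)))
    (fun n => (hh.mul (by fun_prop)).aestronglyMeasurable)
    (fun n => ae_of_all _ fun τ _ => by
      rw [norm_mul, Real.norm_eq_abs, Real.norm_eq_abs, abs_mul, abs_mul, abs_pow, abs_two]
      exact mul_le_mul_of_nonneg_left
        (mul_le_of_le_one_right (by positivity) (abs_cos_le_one _)) (abs_nonneg _))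
    (ae_of_all _ fun τ _ => hgeom.mul_left _)
    (by simp_rw [tsum_mul_left]; exact (hh.abs.mul continuous_const).intervalIntegrable _ _)
    (ae_of_all _ fun τ _ => (hasSum_diskPoissonKernel hr (θ - τ)).mul_left (h τ))
  have hterm (n : ℕ) : ∫ τ in 0..2 * π, h τ * (2 * r ^ (n + 1) * cos ((n + 1) * (θ - τ)))
      = 2 * r ^ (n + 1) * ((∫ τ in 0..2 * π, h τ * cos ((n + 1) * τ)) * cos ((n + 1) * θ)
          + (∫ τ in 0..2 * π, h τ * sin ((n + 1) * τ)) * sin ((n + 1) * θ)) := by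
    have hcos : Continuous fun τ => h τ * cos ((n + 1) * τ) := by fun_prop
    have hsin : Continuous fun τ => h τ * sin ((n + 1) * τ) := by fun_prop
    rw [mul_add, mul_comm (∫ τ in 0..2 * π, h τ * cos ((n + 1) * τ)),
      mul_comm (∫ τ in 0..2 * π, h τ * sin ((n + 1) * τ)), ← mul_assoc, ← mul_assoc,
      ← intervalIntegral.integral_const_mul, ← intervalIntegral.integral_const_mul,
      ← intervalIntegral.integral_add (hcos.intervalIntegrable _ _ |>.const_mul _)
        (hsin.intervalIntegrable _ _ |>.const_mul _)]
    congr 1 with τ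
    rw [mul_sub, cos_sub]
    ring
  have hsum : ∫ τ in 0..2 * π, h τ * (diskPoissonKernel r (θ - τ) - 1)
      = (∫ τ in 0..2 * π, h τ * diskPoissonKernel r (θ - τ)) - ∫ τ in 0..2 * π, h τ := by
    simp_rw [mul_sub, mul_one]
    exact intervalIntegral.integral_sub ((hh.mul ((continuous_diskPoissonKernel hr).comp
      (continuous_const.sub continuous_id))).intervalIntegrable _ _) (hh.intervalIntegrable _ _)
  rw [← hsum]
  exact hint.congr_fun fun n => (hterm n).symm

lemma integral_diskPoissonKernel {r : ℝ} (hr : |r| < 1) :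
    ∫ φ in -π..π, diskPoissonKernel r φ = 2 * π := by
  have hsum := (hasSum_poissonIntegral_fourier (h := fun _ => 1) continuous_const hr 0).tsum_eq
  have hshift := integral_mul_comp_sub_of_periodic (g := fun _ => 1) (fun _ => rfl)
    (diskPoissonKernel_periodic (r := r)) 0
  simp only [one_mul, integral_cos_succ_mul, integral_sin_succ_mul, zero_mul, add_zero,
    mul_zero, tsum_zero, intervalIntegral.integral_const, smul_eq_mul, mul_one, sub_zero]
    at hsum hshift
  linarith

lemma tendsto_integral_mul_diskPoissonKernel {g : ℝ → ℝ} (hg : IntervalIntegrable g volume (-π) π)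
    (hg0 : ContinuousAt g 0) :
    Tendsto (fun r => (2 * π)⁻¹ * ∫ φ in -π..π, g φ * diskPoissonKernel r φ) (𝓝[<] 1)
      (𝓝 (g 0)) := by
  have hπ : -π ≤ π := by linarith [pi_pos]
  have hr : ∀ᶠ r in 𝓝[<] (1 : ℝ), |r| < 1 := by
    filter_upwards [Ioo_mem_nhdsLT (show (-1 : ℝ) < 1 by norm_num)] with r hr using abs_lt.2 hr
  have hpeak := tendsto_setIntegral_peak_smul_of_integrableOn_of_tendsto (μ := volume)
    (l := 𝓝[<] 1) (x₀ := 0) (φ := fun r φ => (2 * π)⁻¹ * diskPoissonKernel r φ) (g := g)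
    measurableSet_Ioc measurableSet_Ioc subset_rfl self_mem_nhdsWithin measure_Ioc_lt_top.ne
    (by filter_upwards [hr] with r hr x _ using
      mul_nonneg (by positivity) (diskPoissonKernel_nonneg hr x))
    (fun u hu hu0 => by
      have := (uniformContinuous_const_mul (x := (2 * π)⁻¹)).comp_tendstoUniformlyOn
        (tendstoUniformlyOn_diskPoissonKernel hu hu0)
      simp only [Function.comp_def, Pi.zero_apply, mul_zero] at this
      exact this)
    (tendsto_const_nhds.congr' <| by
      filter_upwards [hr] with r hr
      rw [← intervalIntegral.integral_of_le hπ, intervalIntegral.integral_const_mul,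
        integral_diskPoissonKernel hr, inv_mul_cancel₀ (by positivity)])
    (by filter_upwards [hr] with r hr using
      ((continuous_diskPoissonKernel hr).const_mul _).aestronglyMeasurable)
    ((intervalIntegrable_iff_integrableOn_Ioc_of_le hπ).1 hg)
    (hg0.tendsto.mono_left nhdsWithin_le_nhds)
  refine hpeak.congr fun r => ?_
  rw [intervalIntegral.integral_of_le hπ, ← integral_const_mul]
  congr 1 with φ
  rw [smul_eq_mul]
  ring

theorem tendsto_poissonIntegral {h : ℝ → ℝ} (hh : Continuous h)
    (hper : Function.Periodic h (2 * π)) (θ : ℝ) :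
    Tendsto (fun r => (2 * π)⁻¹ * ∫ τ in 0..2 * π, h τ * diskPoissonKernel r (θ - τ)) (𝓝[<] 1)
      (𝓝 (h θ)) := by
  simp_rw [integral_mul_comp_sub_of_periodic hper diskPoissonKernel_periodic θ]
  simpa using tendsto_integral_mul_diskPoissonKernel (g := fun φ => h (θ - φ))
    ((by fun_prop : Continuous fun φ => h (θ - φ)).intervalIntegrable _ _)
    (by fun_prop : Continuous fun φ => h (θ - φ)).continuousAt

end DiskPoissonKernel

noncomputable def annulusCorrection (q r : ℝ) (n : ℕ) : ℝ := q ^ (2 * n) * ((r ^ n)⁻¹ - r ^ n)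

noncomputable def annulusCoeff (q : ℝ) (h : ℝ → ℝ) (θ : ℝ) (n : ℕ) : ℝ :=
  (∫ τ in 0..2 * π, h τ * cos (n * τ)) * cos (n * θ) / (1 + q ^ (2 * n))
    - (∫ τ in 0..2 * π, h τ * sin (n * τ)) * sin (n * θ) / (1 - q ^ (2 * n))

section AnnulusCorrection

variable {q r : ℝ}

lemma abs_annulusCorrection_le (hq : 0 < q) (hqr : q ≤ r) (hr : r ≤ 1) (n : ℕ) :
    |annulusCorrection q r n| ≤ q ^ n := by
  have hqn : 0 < q ^ n := pow_pos hq n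
  have hqrn : q ^ n ≤ r ^ n := pow_le_pow_left₀ hq.le hqr n
  have hrn : r ^ n ≤ 1 := pow_le_one₀ (hq.le.trans hqr) hr
  have hinv : 1 ≤ (r ^ n)⁻¹ := one_le_inv₀ (hqn.trans_le hqrn) |>.2 hrn
  have hmul : q ^ n * (r ^ n)⁻¹ ≤ 1 := by
    rw [← div_eq_mul_inv]; exact div_le_one_of_le₀ hqrn (hqn.le.trans hqrn)
  rw [annulusCorrection, pow_mul', abs_of_nonneg (by nlinarith)]
  nlinarith [mul_le_mul_of_nonneg_left hmul hqn.le, mul_pos hqn (hqn.trans_le hqrn)]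

lemma tendsto_annulusCorrection (q : ℝ) (n : ℕ) :
    Tendsto (fun r => annulusCorrection q r n) (𝓝 1) (𝓝 0) := by
  have : ContinuousAt (fun r => annulusCorrection q r n) 1 := by
    unfold annulusCorrection
    exact continuousAt_const.mul (((continuous_pow n).continuousAt.inv₀ (by simp)).sub
      (continuous_pow n).continuousAt)
  simpa [annulusCorrection] using this.tendsto

lemma summable_annulusCorrection_mul (hq0 : 0 < q) (hq1 : q < 1) (hqr : q ≤ r) (hr : r ≤ 1)
    {a : ℕ → ℝ} {M : ℝ} (ha : ∀ n, |a n| ≤ M) :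
    Summable fun n => annulusCorrection q r (n + 1) * a n :=
  .of_norm_bounded
    (((summable_nat_add_iff 1).2 (summable_geometric_of_lt_one hq0.le hq1)).mul_right M) fun n => by
      rw [norm_mul, Real.norm_eq_abs, Real.norm_eq_abs]
      exact mul_le_mul (abs_annulusCorrection_le hq0 hqr hr _) (ha n) (abs_nonneg _) (by positivity)

lemma tendsto_tsum_annulusCorrection_mul (hq0 : 0 < q) (hq1 : q < 1) {a : ℕ → ℝ} {M : ℝ}
    (ha : ∀ n, |a n| ≤ M) :
    Tendsto (fun r => ∑' n, annulusCorrection q r (n + 1) * a n) (𝓝[<] 1) (𝓝 0) := by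
  simpa using tendsto_tsum_of_dominated_convergence (g := fun _ => (0 : ℝ))
    (((summable_nat_add_iff 1).2 (summable_geometric_of_lt_one hq0.le hq1)).mul_right M)
    (fun n => by
      simpa using
        ((tendsto_annulusCorrection q (n + 1)).mono_left nhdsWithin_le_nhds).mul_const (a n))
    (by
      filter_upwards [Ioo_mem_nhdsLT hq1] with r hr n
      rw [norm_mul, Real.norm_eq_abs, Real.norm_eq_abs]
      exact mul_le_mul (abs_annulusCorrection_le hq0 hr.1.le hr.2.le _) (ha n) (abs_nonneg _)
        (by positivity))

end AnnulusCorrection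

lemma abs_integral_mul_le_integral_abs_s8 {h w : ℝ → ℝ} (hh : Continuous h) (hw : Continuous w)
    (hw1 : ∀ τ, |w τ| ≤ 1) {a b : ℝ} (hab : a ≤ b) :
    |∫ τ in a..b, h τ * w τ| ≤ ∫ τ in a..b, |h τ| :=
  (intervalIntegral.norm_integral_le_integral_norm hab).trans <|
    intervalIntegral.integral_mono_on hab ((hh.mul hw).norm.intervalIntegrable _ _)
      (hh.abs.intervalIntegrable _ _) fun τ _ => by
        simp only [Real.norm_eq_abs, Pi.mul_apply, abs_mul]
        exact mul_le_of_le_one_right (abs_nonneg _) (hw1 τ)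

lemma abs_annulusCoeff_le {q : ℝ} (hq0 : 0 < q) (hq1 : q < 1) {h : ℝ → ℝ} (hh : Continuous h)
    (θ : ℝ) {n : ℕ} (hn : 1 ≤ n) :
    |annulusCoeff q h θ n| ≤ (∫ τ in 0..2 * π, |h τ|) * (1 + (1 - q ^ 2)⁻¹) := by
  set L := ∫ τ in 0..2 * π, |h τ|
  have h2π : (0 : ℝ) ≤ 2 * π := by positivity
  have hsq : q ^ (2 * n) ≤ q ^ 2 := pow_le_pow_of_le_one hq0.le hq1.le (by omega)
  have hq2 : q ^ 2 < 1 := by nlinarith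
  have hc : |(∫ τ in 0..2 * π, h τ * cos (n * τ)) * cos (n * θ)| ≤ L := by
    rw [abs_mul]
    exact mul_le_of_le_one_right (abs_nonneg _) (abs_cos_le_one _) |>.trans
      (abs_integral_mul_le_integral_abs_s8 hh (by fun_prop) (fun _ => abs_cos_le_one _) h2π)
  have hs : |(∫ τ in 0..2 * π, h τ * sin (n * τ)) * sin (n * θ)| ≤ L := by
    rw [abs_mul]
    exact mul_le_of_le_one_right (abs_nonneg _) (abs_sin_le_one _) |>.trans
      (abs_integral_mul_le_integral_abs_s8 hh (by fun_prop) (fun _ => abs_sin_le_one _) h2π)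
  have hL : 0 ≤ L := (abs_nonneg _).trans hc
  rw [annulusCoeff, mul_add, mul_one, ← div_eq_mul_inv]
  refine (abs_sub _ _).trans (add_le_add ?_ ?_)
  · rw [abs_div, abs_of_pos (show 0 < 1 + q ^ (2 * n) by positivity)]
    exact div_le_of_le_mul₀ (by positivity) hL
      (hc.trans (le_mul_of_one_le_right hL (le_add_of_nonneg_right (by positivity))))
  · rw [abs_div, abs_of_pos (show 0 < 1 - q ^ (2 * n) by linarith)]
    exact div_le_div₀ hL hs (by linarith) (by linarith)

lemma hasSum_annulus_series {q : ℝ} (hq0 : 0 < q) (hq1 : q < 1) {h : ℝ → ℝ} (hh : Continuous h)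
    {A B : ℕ → ℝ}
    (hA : ∀ k : ℕ, 1 ≤ k → A k =
      (1 / (π * (1 + q ^ (2 * k)))) * ∫ τ in (0 : ℝ)..(2 * π), h τ * cos (k * τ))
    (hB : ∀ k : ℕ, 1 ≤ k → B k =
      (1 / (π * (1 - q ^ (2 * k)))) * ∫ τ in (0 : ℝ)..(2 * π), h τ * sin (k * τ))
    {r : ℝ} (hqr : q < r) (hr1 : r < 1) (θ : ℝ) :
    HasSum (fun k : ℕ =>
        A (k + 1) * (r ^ (k + 1) + q ^ (2 * (k + 1)) * r ^ (-((k : ℤ) + 1))) * cos ((k + 1) * θ)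
          + B (k + 1) * (r ^ (k + 1) - q ^ (2 * (k + 1)) * r ^ (-((k : ℤ) + 1)))
            * sin ((k + 1) * θ))
      ((2 * π)⁻¹ * ((∫ τ in 0..2 * π, h τ * diskPoissonKernel r (θ - τ)) - ∫ τ in 0..2 * π, h τ)
        + π⁻¹ * ∑' k, annulusCorrection q r (k + 1) * annulusCoeff q h θ (k + 1)) := by
  have hr : |r| < 1 := abs_lt.2 ⟨by linarith, hr1⟩
  have hpoisson := (hasSum_poissonIntegral_fourier hh hr θ).mul_left (2 * π)⁻¹
  have hcorr := (summable_annulusCorrection_mul hq0 hq1 hqr.le hr1.le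
    fun k => abs_annulusCoeff_le hq0 hq1 hh θ (Nat.le_add_left 1 k)).hasSum.mul_left π⁻¹
  refine (hpoisson.add hcorr).congr_fun fun k => ?_
  have hs : q ^ (2 * (k + 1)) < 1 := pow_lt_one₀ hq0.le hq1 (by omega)
  have hzpow : r ^ (-((k : ℤ) + 1)) = (r ^ (k + 1))⁻¹ := by
    rw [zpow_neg, ← zpow_natCast]; push_cast; rfl
  rw [hA _ (Nat.le_add_left 1 k), hB _ (Nat.le_add_left 1 k), hzpow, annulusCorrection,
    annulusCoeff]
  push_cast
  field_simp [pi_pos.ne', (by linarith : 1 - q ^ (2 * (k + 1)) ≠ 0),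
    (by positivity : 1 + q ^ (2 * (k + 1)) ≠ 0)]
  ring

/-- for continuous periodic boundary data `h`, the annulus series
solution attains the boundary value: `f(r,θ) → h(θ)` as `r → 1⁻`. -/
theorem annulus_series_boundary
    (q : ℝ) (hq0 : 0 < q) (hq1 : q < 1)
    (h : ℝ → ℝ) (hcont : Continuous h) (hper : Function.Periodic h (2 * π))
    (A B : ℕ → ℝ)
    (hA0 : A 0 = (1 / π) * ∫ τ in (0 : ℝ)..(2 * π), h τ)
    (hA : ∀ k : ℕ, 1 ≤ k → A k =
      (1 / (π * (1 + q ^ (2 * k)))) * ∫ τ in (0 : ℝ)..(2 * π), h τ * Real.cos (k * τ))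
    (hB : ∀ k : ℕ, 1 ≤ k → B k =
      (1 / (π * (1 - q ^ (2 * k)))) * ∫ τ in (0 : ℝ)..(2 * π), h τ * Real.sin (k * τ))
    (f : ℝ → ℝ → ℝ)
    (hf : ∀ r θ : ℝ, f r θ = A 0 / 2 + ∑' k : ℕ,
      (A (k + 1) * (r ^ (k + 1) + q ^ (2 * (k + 1)) * r ^ (-((k : ℤ) + 1)))
          * Real.cos (((k : ℝ) + 1) * θ)
        + B (k + 1) * (r ^ (k + 1) - q ^ (2 * (k + 1)) * r ^ (-((k : ℤ) + 1)))
          * Real.sin (((k : ℝ) + 1) * θ)))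
    (θ : ℝ) :
    Filter.Tendsto (fun r => f r θ) (nhdsWithin 1 (Set.Iio 1)) (nhds (h θ)) := by
  have hf' : ∀ r ∈ Ioo q 1, (2 * π)⁻¹ * (∫ τ in 0..2 * π, h τ * diskPoissonKernel r (θ - τ))
      + π⁻¹ * ∑' k, annulusCorrection q r (k + 1) * annulusCoeff q h θ (k + 1) = f r θ := by
    rintro r ⟨hqr, hr1⟩
    rw [hf, (hasSum_annulus_series hq0 hq1 hcont hA hB hqr hr1 θ).tsum_eq, hA0]
    ring
  have hcorr := tendsto_tsum_annulusCorrection_mul hq0 hq1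
    fun k => abs_annulusCoeff_le hq0 hq1 hcont θ (Nat.le_add_left 1 k)
  have hlim := (tendsto_poissonIntegral hcont hper θ).add (hcorr.const_mul π⁻¹)
  rw [mul_zero, add_zero] at hlim
  exact hlim.congr' (eventually_of_mem (Ioo_mem_nhdsLT hq1) hf')
end

section
/- Let a > b > 0, A = (a+b)/2, B = (a−b)/2, q = √((a−b)/(a+b)). Let r ≥ q and θ ∈ ℝ, and set w = (A·r + B/r)·cos θ, z = (A·r − B/r)·sin θ. Then A²·r² + B²/r² = (w² + z² + √((w²+z²)² − 2(a²−b²)(w²−z²) + (a²−b²)²))/2, and moreover, denoting this common value by m, r² = (m + √(m² − 4A²B²))/(2A²). -/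
set_option maxHeartbeats 1600000


/-- inversion of the Ghizzetti map: the quantity `m = A²r² + B²/r²`
is expressed in terms of `(w,z)`, and `r²` is the root with positive sign of the
quadratic `A²r⁴ - m r² + B² = 0`. -/
theorem ghizzetti_inversion_r
    (a b : ℝ) (hb : 0 < b) (hab : b < a)
    (A B q : ℝ) (hA : A = (a + b) / 2) (hB : B = (a - b) / 2)
    (hq : q = Real.sqrt ((a - b) / (a + b)))
    (r θ : ℝ) (hr : q ≤ r)
    (w z : ℝ)
    (hw : w = (A * r + B / r) * Real.cos θ)
    (hz : z = (A * r - B / r) * Real.sin θ) :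
    A ^ 2 * r ^ 2 + B ^ 2 / r ^ 2
      = (w ^ 2 + z ^ 2 + Real.sqrt ((w ^ 2 + z ^ 2) ^ 2
          - 2 * (a ^ 2 - b ^ 2) * (w ^ 2 - z ^ 2) + (a ^ 2 - b ^ 2) ^ 2)) / 2
    ∧ r ^ 2 = ((A ^ 2 * r ^ 2 + B ^ 2 / r ^ 2)
        + Real.sqrt ((A ^ 2 * r ^ 2 + B ^ 2 / r ^ 2) ^ 2 - 4 * A ^ 2 * B ^ 2))
        / (2 * A ^ 2) := by
  have hApos : 0 < A := by rw [hA]; linarith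
  have hBpos : 0 < B := by rw [hB]; linarith
  have habne : a + b ≠ 0 := by linarith
  have habpos : 0 < (a - b) / (a + b) := div_pos (by linarith) (by linarith)
  have hqpos : 0 < q := by rw [hq]; exact Real.sqrt_pos.mpr habpos
  have hrpos : 0 < r := lt_of_lt_of_le hqpos hr
  have hrne : r ≠ 0 := ne_of_gt hrpos
  have hq2 : q ^ 2 = (a - b) / (a + b) := by
    rw [hq, sq, Real.mul_self_sqrt habpos.le]
  have hr2 : q ^ 2 ≤ r ^ 2 := by nlinarith
  have hBA : B = A * q ^ 2 := by
    rw [hq2, hA, hB]; field_simp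
  have hArB : B ≤ A * r ^ 2 := by
    rw [hBA]; nlinarith
  have hsin : Real.sin θ ^ 2 = 1 - Real.cos θ ^ 2 := by
    have := Real.sin_sq_add_cos_sq θ; linarith
  have hs2 : 0 ≤ 1 - Real.cos θ ^ 2 := by rw [← hsin]; positivity
  have hab2 : a ^ 2 - b ^ 2 = 4 * A * B := by rw [hA, hB]; ring
  have hcos1 : Real.cos θ ^ 2 ≤ 1 := Real.cos_sq_le_one θ
  set m := A ^ 2 * r ^ 2 + B ^ 2 / r ^ 2 with hm
  have hmge : 2 * A * B ≤ m := by
    have h := sq_nonneg (A * r - B / r)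
    have h2 : (A * r - B / r) ^ 2 = m - 2 * A * B * (r / r) := by
      rw [hm]; field_simp; ring
    rw [h2, div_self hrne] at h; linarith
  have hw2 : w ^ 2 = (A * r + B / r) ^ 2 * Real.cos θ ^ 2 := by
    rw [hw, mul_pow]
  have hz2 : z ^ 2 = (A * r - B / r) ^ 2 * (1 - Real.cos θ ^ 2) := by
    rw [hz, mul_pow, hsin]
  constructor
  · have hE : (w ^ 2 + z ^ 2) ^ 2 - 2 * (a ^ 2 - b ^ 2) * (w ^ 2 - z ^ 2)
        + (a ^ 2 - b ^ 2) ^ 2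
        = (m - 2 * A * B * (2 * Real.cos θ ^ 2 - 1)) ^ 2 := by
      rw [hw2, hz2, hab2, hm]; field_simp; ring
    have hnn : 0 ≤ m - 2 * A * B * (2 * Real.cos θ ^ 2 - 1) := by
      nlinarith [mul_nonneg (mul_pos hApos hBpos).le hs2]
    rw [hE, Real.sqrt_sq hnn]
    have hsum : w ^ 2 + z ^ 2 = m + 2 * A * B * (2 * Real.cos θ ^ 2 - 1) := by
      rw [hw2, hz2, hm]; field_simp; ring
    rw [hsum]; ring
  · have hE2 : m ^ 2 - 4 * A ^ 2 * B ^ 2 = (A ^ 2 * r ^ 2 - B ^ 2 / r ^ 2) ^ 2 := by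
      rw [hm]; field_simp; ring
    have hnn2 : 0 ≤ A ^ 2 * r ^ 2 - B ^ 2 / r ^ 2 := by
      rw [sub_nonneg, div_le_iff₀ (by positivity)]
      nlinarith [mul_le_mul hArB hArB hBpos.le (by positivity : (0:ℝ) ≤ A * r ^ 2)]
    rw [hE2, Real.sqrt_sq hnn2, hm,
      show A ^ 2 * r ^ 2 + B ^ 2 / r ^ 2 + (A ^ 2 * r ^ 2 - B ^ 2 / r ^ 2)
        = 2 * A ^ 2 * r ^ 2 from by ring]
    field_simp
end

section
/- Let a > b > 0, A = (a+b)/2, B = (a−b)/2. Let r > 0 and θ ∈ ℝ, and set w = (A·r + B/r)·cos θ, z = (A·r − B/r)·sin θ. Then sin²θ = (−(w² + z²) + (a²−b²) + √((w² + z² − (a²−b²))² + 4(a²−b²)·z²))/(2(a²−b²)). -/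
/-- inversion of the angular coordinate of the Ghizzetti map:
`sin²θ` expressed in terms of `(w,z)`. -/
theorem ghizzetti_inversion_theta
    (a b : ℝ) (hb : 0 < b) (hab : b < a)
    (A B : ℝ) (hA : A = (a + b) / 2) (hB : B = (a - b) / 2)
    (r θ : ℝ) (hr : 0 < r)
    (w z : ℝ)
    (hw : w = (A * r + B / r) * Real.cos θ)
    (hz : z = (A * r - B / r) * Real.sin θ) :
    Real.sin θ ^ 2
      = (-(w ^ 2 + z ^ 2) + (a ^ 2 - b ^ 2)
          + Real.sqrt ((w ^ 2 + z ^ 2 - (a ^ 2 - b ^ 2)) ^ 2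
              + 4 * (a ^ 2 - b ^ 2) * z ^ 2))
        / (2 * (a ^ 2 - b ^ 2)) := by
  have hc : (0:ℝ) < a ^ 2 - b ^ 2 := by nlinarith
  have hr' : r ≠ 0 := ne_of_gt hr
  have hs := Real.sin_sq_add_cos_sq θ
  set s := Real.sin θ
  set c := Real.cos θ
  set u : ℝ := B / r with hu
  have hAB : 4 * (A * u * r) = a ^ 2 - b ^ 2 := by
    rw [hu, hA, hB]; field_simp; ring
  rw [show A * r + B / r = A * r + u from rfl] at hw
  rw [show A * r - B / r = A * r - u from rfl] at hz
  have key : (w ^ 2 + z ^ 2 - (a ^ 2 - b ^ 2)) ^ 2 + 4 * (a ^ 2 - b ^ 2) * z ^ 2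
      = (2 * (a ^ 2 - b ^ 2) * s ^ 2 + (w ^ 2 + z ^ 2) - (a ^ 2 - b ^ 2)) ^ 2 := by
    subst hw hz
    linear_combination (-(4 * (a ^ 2 - b ^ 2) * s ^ 2 * c ^ 2)) * hAB
      + (-(4 * (a ^ 2 - b ^ 2) * s ^ 2 * ((a ^ 2 - b ^ 2) + (A * r - u) ^ 2))) * hs
  have hbase : 0 ≤ 2 * (a ^ 2 - b ^ 2) * s ^ 2 + (w ^ 2 + z ^ 2) - (a ^ 2 - b ^ 2) := by
    have h1 : 2 * (a ^ 2 - b ^ 2) * s ^ 2 + (w ^ 2 + z ^ 2) - (a ^ 2 - b ^ 2)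
        = (a ^ 2 - b ^ 2) * s ^ 2 + (A * r - u) ^ 2 := by
      subst hw hz
      linear_combination ((a ^ 2 - b ^ 2) + (A * r - u) ^ 2) * hs + c ^ 2 * hAB
    rw [h1]
    positivity
  rw [key, Real.sqrt_sq hbase]
  field_simp
  ring
end

section
/- Let 0 < q < 1 and η̂ = −log q > 0, and let h : ℝ → ℝ be 2π-periodic and integrable on [0,2π]. Set A₀ = (1/π)·∫₀^{2π} h(τ) dτ, and for each k ≥ 1 set A_k = (1/(π·cosh(k·η̂)))·∫₀^{2π} h(τ)·cos(kτ) dτ and D_k = (1/(π·sinh(k·η̂)))·∫₀^{2π} h(τ)·sin(kτ) dτ. Define g(η,φ) = A₀/2 + ∑_{k=1}^∞ [A_k·cosh(kη)·cos(kφ) + D_k·sinh(kη)·sin(kφ)]. Then g satisfies the Laplace equation ∂²g/∂η² + ∂²g/∂φ² = 0 at every point (η,φ) with |η| < η̂ and φ ∈ ℝ. -/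
open Real

/-!
Each term `a cosh (K η) cos (K φ) + d sinh (K η) sin (K φ)` of the series satisfies
`∂²/∂η² = K²·term` and `∂²/∂φ² = -K²·term`, so the Laplacian vanishes term by term. It remains to
differentiate the series term by term twice in each variable. Since `|∫ h w| ≤ ∫ |h|` for
`|w| ≤ 1`, the coefficients satisfy `|A k| + |D k| ≤ C e^{-k η̂}`, so for `|η| ≤ r < η̂` the terms
and their first two derivatives are bounded by `C k² e^{-k (η̂ - r)}`, a summable majorant.
-/

theorem exp_abs_mul_le {K η r : ℝ} (hK : 0 ≤ K) (hη : |η| ≤ r) : exp |K * η| ≤ exp (K * r) := by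
  rw [exp_le_exp, abs_mul, abs_of_nonneg hK]
  exact mul_le_mul_of_nonneg_left hη hK

theorem abs_cosh_le_exp_abs (x : ℝ) : |cosh x| ≤ exp |x| := by
  rw [abs_of_pos (cosh_pos x), ← cosh_abs, cosh_eq]
  linarith [exp_le_exp.2 (neg_le_self (abs_nonneg x))]

theorem abs_sinh_le_exp_abs (x : ℝ) : |sinh x| ≤ exp |x| := by
  rw [abs_sinh, sinh_eq]
  linarith [exp_pos (-|x|), exp_pos |x|]

theorem inv_cosh_le_two_mul_exp_neg (x : ℝ) : (cosh x)⁻¹ ≤ 2 * exp (-x) := by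
  rw [inv_le_iff_one_le_mul₀' (cosh_pos x), cosh_eq]
  have : exp x * exp (-x) = 1 := by rw [← exp_add, add_neg_cancel, exp_zero]
  nlinarith [exp_pos (-x)]

theorem inv_sinh_le {s x : ℝ} (hs : 0 < s) (hsx : s ≤ x) :
    (sinh x)⁻¹ ≤ 2 / (1 - exp (-(2 * s))) * exp (-x) := by
  have hs1 : exp (-(2 * s)) < 1 := exp_lt_one_iff.2 (by linarith)
  have h1 : exp x * exp (-x) = 1 := by rw [← exp_add, add_neg_cancel, exp_zero]
  have h2 : exp (-(2 * x)) = exp (-x) * exp (-x) := by rw [← exp_add]; ring_nf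
  have h3 : exp (-(2 * x)) ≤ exp (-(2 * s)) := exp_le_exp.2 (by linarith)
  rw [inv_le_iff_one_le_mul₀' (sinh_pos_iff.2 (hs.trans_le hsx))]
  calc 1 ≤ (1 - exp (-(2 * x))) / (1 - exp (-(2 * s))) := by
        rw [le_div_iff₀ (by linarith)]; linarith
    _ = sinh x * (2 / (1 - exp (-(2 * s))) * exp (-x)) := by
        have hq : 1 - exp (-(2 * s)) ≠ 0 := by linarith
        rw [sinh_eq, h2]
        field_simp
        linear_combination -h1

theorem abs_mul_mul_add_mul_mul_le {a d x y x' y' E : ℝ} (hx : |x| ≤ E) (hx' : |x'| ≤ E)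
    (hy : |y| ≤ 1) (hy' : |y'| ≤ 1) : |a * x * y + d * x' * y'| ≤ (|a| + |d|) * E := by
  have hxy : |x * y| ≤ E := by
    rw [abs_mul]; exact (mul_le_of_le_one_right (abs_nonneg x) hy).trans hx
  have hxy' : |x' * y'| ≤ E := by
    rw [abs_mul]; exact (mul_le_of_le_one_right (abs_nonneg x') hy').trans hx'
  calc |a * x * y + d * x' * y'| ≤ |a| * |x * y| + |d| * |x' * y'| := by
        rw [mul_assoc, mul_assoc, ← abs_mul, ← abs_mul]; exact abs_add_le _ _
    _ ≤ (|a| + |d|) * E := by rw [add_mul]; gcongr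

theorem abs_integral_mul_le_integral_abs_s16 {f w : ℝ → ℝ} {a b : ℝ} (hab : a ≤ b)
    (hf : IntervalIntegrable f MeasureTheory.volume a b) (hw : ∀ x, |w x| ≤ 1) :
    |∫ x in a..b, f x * w x| ≤ ∫ x in a..b, |f x| := by
  rw [← norm_eq_abs]
  refine intervalIntegral.norm_integral_le_of_norm_le hab
    (MeasureTheory.ae_of_all _ fun x _ => ?_) hf.abs
  rw [norm_mul, norm_eq_abs, norm_eq_abs]
  exact mul_le_of_le_one_right (abs_nonneg _) (hw x)

theorem abs_one_div_pi_mul_mul_le {s J I : ℝ} (hs : 0 < s) (hJ : |J| ≤ I) :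
    |1 / (π * s) * J| ≤ I / π * s⁻¹ := by
  rw [abs_mul, abs_of_pos (by positivity)]
  calc 1 / (π * s) * |J| ≤ 1 / (π * s) * I := by gcongr
    _ = I / π * s⁻¹ := by field_simp

theorem abs_add_abs_le_of_eq_fourier_coeff {h : ℝ → ℝ}
    (hint : IntervalIntegrable h MeasureTheory.volume 0 (2 * π)) {ρ K a d : ℝ} (hρ : 0 < ρ)
    (hK : 1 ≤ K)
    (ha : a = 1 / (π * cosh (K * ρ)) * ∫ τ in (0 : ℝ)..(2 * π), h τ * cos (K * τ))
    (hd : d = 1 / (π * sinh (K * ρ)) * ∫ τ in (0 : ℝ)..(2 * π), h τ * sin (K * τ)) :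
    |a| + |d| ≤ (∫ τ in (0 : ℝ)..(2 * π), |h τ|) / π * (2 + 2 / (1 - exp (-(2 * ρ))))
      * exp (-(K * ρ)) := by
  set I := ∫ τ in (0 : ℝ)..(2 * π), |h τ|
  have h2π : (0 : ℝ) ≤ 2 * π := by positivity
  have hI : 0 ≤ I / π :=
    div_nonneg (intervalIntegral.integral_nonneg h2π fun _ _ => abs_nonneg _) pi_pos.le
  have hρK : ρ ≤ K * ρ := le_mul_of_one_le_left hρ.le hK
  have ha' : |a| ≤ I / π * (cosh (K * ρ))⁻¹ := ha ▸ abs_one_div_pi_mul_mul_le (cosh_pos _)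
    (abs_integral_mul_le_integral_abs_s16 h2π hint fun _ => abs_cos_le_one _)
  have hd' : |d| ≤ I / π * (sinh (K * ρ))⁻¹ := hd ▸ abs_one_div_pi_mul_mul_le
    (sinh_pos_iff.2 (hρ.trans_le hρK))
    (abs_integral_mul_le_integral_abs_s16 h2π hint fun _ => abs_sin_le_one _)
  calc |a| + |d|
      ≤ I / π * (2 * exp (-(K * ρ))) + I / π * (2 / (1 - exp (-(2 * ρ))) * exp (-(K * ρ))) := by
        gcongr
        · exact ha'.trans (mul_le_mul_of_nonneg_left (inv_cosh_le_two_mul_exp_neg _) hI)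
        · exact hd'.trans (mul_le_mul_of_nonneg_left (inv_sinh_le hρ hρK) hI)
    _ = _ := by ring

theorem summable_sq_mul_mul_exp {c : ℕ → ℝ} {M ρ r : ℝ} (hc0 : ∀ k, 0 ≤ c k)
    (hc : ∀ k : ℕ, c k ≤ M * exp (-(((k : ℝ) + 1) * ρ))) (hr : r < ρ) :
    Summable fun k : ℕ => ((k : ℝ) + 1) ^ 2 * (c k * exp (((k : ℝ) + 1) * r)) := by
  have hM : Summable fun k : ℕ => M * (((k + 1 : ℕ) : ℝ) ^ 2 * exp (-(ρ - r) * (k + 1 : ℕ))) :=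
    ((summable_nat_add_iff 1).2 (summable_pow_mul_exp_neg_nat_mul 2 (sub_pos.2 hr))).mul_left M
  refine hM.of_nonneg_of_le (fun k => by have := hc0 k; positivity) fun k => ?_
  calc ((k : ℝ) + 1) ^ 2 * (c k * exp (((k : ℝ) + 1) * r))
      ≤ ((k : ℝ) + 1) ^ 2 * (M * exp (-(((k : ℝ) + 1) * ρ)) * exp (((k : ℝ) + 1) * r)) := by
        gcongr; exact hc k
    _ = M * (((k : ℝ) + 1) ^ 2 * (exp (-(((k : ℝ) + 1) * ρ)) * exp (((k : ℝ) + 1) * r))) := by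
        ring
    _ = _ := by push_cast; rw [← exp_add]; ring_nf

theorem deriv_deriv_tsum_of_isPreconnected {α 𝕜 F : Type*} [RCLike 𝕜] [NormedAddCommGroup F]
    [CompleteSpace F] [NormedSpace 𝕜 F] {f f' f'' : α → 𝕜 → F} {u : α → ℝ} {s : Set 𝕜}
    (hu : Summable u) (hs : IsOpen s) (hs' : IsPreconnected s)
    (hf : ∀ n y, y ∈ s → HasDerivAt (f n) (f' n y) y)
    (hf' : ∀ n y, y ∈ s → HasDerivAt (f' n) (f'' n y) y)
    (hbound : ∀ n y, y ∈ s → ‖f n y‖ ≤ u n ∧ ‖f' n y‖ ≤ u n ∧ ‖f'' n y‖ ≤ u n)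
    {x : 𝕜} (hx : x ∈ s) :
    deriv (deriv fun y => ∑' n, f n y) x = ∑' n, f'' n x := by
  have hderiv : ∀ y ∈ s, HasDerivAt (fun z => ∑' n, f n z) (∑' n, f' n y) y := fun y hy =>
    hasDerivAt_tsum_of_isPreconnected hu hs hs' hf (fun n y hy => (hbound n y hy).2.1) hx
      (.of_norm_bounded hu fun n => (hbound n x hx).1) hy
  have hderiv' : HasDerivAt (fun z => ∑' n, f' n z) (∑' n, f'' n x) x :=
    hasDerivAt_tsum_of_isPreconnected hu hs hs' hf' (fun n y hy => (hbound n y hy).2.2) hx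
      (.of_norm_bounded hu fun n => (hbound n x hx).2.1) hx
  have heq : deriv (fun z => ∑' n, f n z) =ᶠ[nhds x] fun z => ∑' n, f' n z := by
    filter_upwards [hs.mem_nhds hx] with y hy using (hderiv y hy).deriv
  rw [heq.deriv_eq, hderiv'.deriv]

theorem norm_le_sq_mul_of_abs_le {K X Y B : ℝ} (hK : 1 ≤ K) (hX : |X| ≤ B) (hY : |Y| ≤ B) :
    ‖X‖ ≤ K ^ 2 * B ∧ ‖K * Y‖ ≤ K ^ 2 * B ∧ ‖K ^ 2 * X‖ ≤ K ^ 2 * B := by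
  have hB : 0 ≤ B := (abs_nonneg X).trans hX
  have hK2 : 1 ≤ K ^ 2 := one_le_pow₀ hK
  simp only [norm_mul, norm_pow, norm_eq_abs, abs_of_nonneg (zero_le_one.trans hK)]
  refine ⟨hX.trans (le_mul_of_one_le_left hB hK2), ?_, by gcongr⟩
  calc K * |Y| ≤ K * B := by gcongr
    _ ≤ K ^ 2 * B := by gcongr; nlinarith

noncomputable def ellipticMode (a d K η φ : ℝ) : ℝ :=
  a * cosh (K * η) * cos (K * φ) + d * sinh (K * η) * sin (K * φ)

section ellipticMode

variable (a d K η φ : ℝ)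

theorem hasDerivAt_ellipticMode_fst :
    HasDerivAt (fun y => ellipticMode a d K y φ)
      (K * (a * sinh (K * η) * cos (K * φ) + d * cosh (K * η) * sin (K * φ))) η :=
  ((((hasDerivAt_const_mul (x := η) K).cosh.const_mul a).mul_const (cos (K * φ))).fun_add
    (((hasDerivAt_const_mul (x := η) K).sinh.const_mul d).mul_const (sin (K * φ)))).congr_deriv
    (by ring)

theorem hasDerivAt_ellipticMode_fst_deriv :
    HasDerivAt (fun y => K * (a * sinh (K * y) * cos (K * φ) + d * cosh (K * y) * sin (K * φ)))
      (K ^ 2 * ellipticMode a d K η φ) η :=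
  (((((hasDerivAt_const_mul (x := η) K).sinh.const_mul a).mul_const (cos (K * φ))).fun_add
    (((hasDerivAt_const_mul (x := η) K).cosh.const_mul d).mul_const (sin (K * φ)))).const_mul
    K).congr_deriv (by unfold ellipticMode; ring)

theorem hasDerivAt_ellipticMode_snd :
    HasDerivAt (fun y => ellipticMode a d K η y)
      (K * (a * cosh (K * η) * -sin (K * φ) + d * sinh (K * η) * cos (K * φ))) φ :=
  (((hasDerivAt_const_mul (x := φ) K).cos.const_mul (a * cosh (K * η))).fun_add
    ((hasDerivAt_const_mul (x := φ) K).sin.const_mul (d * sinh (K * η)))).congr_deriv (by ring)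

theorem hasDerivAt_ellipticMode_snd_deriv :
    HasDerivAt (fun y => K * (a * cosh (K * η) * -sin (K * y) + d * sinh (K * η) * cos (K * y)))
      (-(K ^ 2 * ellipticMode a d K η φ)) φ :=
  ((((hasDerivAt_const_mul (x := φ) K).sin.neg.const_mul (a * cosh (K * η))).fun_add
    ((hasDerivAt_const_mul (x := φ) K).cos.const_mul (d * sinh (K * η)))).const_mul K).congr_deriv
    (by unfold ellipticMode; ring)

variable {a d K η φ} {r : ℝ}

theorem abs_cosh_mul_le (hK : 0 ≤ K) (hη : |η| ≤ r) : |cosh (K * η)| ≤ exp (K * r) :=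
  (abs_cosh_le_exp_abs _).trans (exp_abs_mul_le hK hη)

theorem abs_sinh_mul_le (hK : 0 ≤ K) (hη : |η| ≤ r) : |sinh (K * η)| ≤ exp (K * r) :=
  (abs_sinh_le_exp_abs _).trans (exp_abs_mul_le hK hη)

theorem abs_ellipticMode_le (hK : 0 ≤ K) (hη : |η| ≤ r) :
    |ellipticMode a d K η φ| ≤ (|a| + |d|) * exp (K * r) :=
  abs_mul_mul_add_mul_mul_le (abs_cosh_mul_le hK hη) (abs_sinh_mul_le hK hη) (abs_cos_le_one _)
    (abs_sin_le_one _)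

theorem ellipticMode_fst_bounds (hK : 1 ≤ K) (hη : |η| ≤ r) :
    ‖ellipticMode a d K η φ‖ ≤ K ^ 2 * ((|a| + |d|) * exp (K * r)) ∧
    ‖K * (a * sinh (K * η) * cos (K * φ) + d * cosh (K * η) * sin (K * φ))‖
      ≤ K ^ 2 * ((|a| + |d|) * exp (K * r)) ∧
    ‖K ^ 2 * ellipticMode a d K η φ‖ ≤ K ^ 2 * ((|a| + |d|) * exp (K * r)) :=
  have hK0 : 0 ≤ K := zero_le_one.trans hK
  norm_le_sq_mul_of_abs_le hK (abs_ellipticMode_le hK0 hη)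
    (abs_mul_mul_add_mul_mul_le (abs_sinh_mul_le hK0 hη) (abs_cosh_mul_le hK0 hη)
      (abs_cos_le_one _) (abs_sin_le_one _))

theorem ellipticMode_snd_bounds (hK : 1 ≤ K) (hη : |η| ≤ r) :
    ‖ellipticMode a d K η φ‖ ≤ K ^ 2 * ((|a| + |d|) * exp (K * r)) ∧
    ‖K * (a * cosh (K * η) * -sin (K * φ) + d * sinh (K * η) * cos (K * φ))‖
      ≤ K ^ 2 * ((|a| + |d|) * exp (K * r)) ∧
    ‖-(K ^ 2 * ellipticMode a d K η φ)‖ ≤ K ^ 2 * ((|a| + |d|) * exp (K * r)) := by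
  have hK0 : 0 ≤ K := zero_le_one.trans hK
  rw [norm_neg]
  exact norm_le_sq_mul_of_abs_le hK (abs_ellipticMode_le hK0 hη)
    (abs_mul_mul_add_mul_mul_le (abs_cosh_mul_le hK0 hη) (abs_sinh_mul_le hK0 hη)
      (by rw [abs_neg]; exact abs_sin_le_one _) (abs_cos_le_one _))

end ellipticMode

section series

variable {ι : Type*} {a d K : ι → ℝ} {r : ℝ}

theorem deriv_deriv_tsum_ellipticMode_fst (hK : ∀ i, 1 ≤ K i)
    (hu : Summable fun i => K i ^ 2 * ((|a i| + |d i|) * exp (K i * r)))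
    {η : ℝ} (hη : |η| < r) (φ : ℝ) :
    deriv (deriv fun y => ∑' i, ellipticMode (a i) (d i) (K i) y φ) η
      = ∑' i, K i ^ 2 * ellipticMode (a i) (d i) (K i) η φ :=
  deriv_deriv_tsum_of_isPreconnected hu isOpen_Ioo isPreconnected_Ioo
    (fun _ _ _ => hasDerivAt_ellipticMode_fst _ _ _ _ _)
    (fun _ _ _ => hasDerivAt_ellipticMode_fst_deriv _ _ _ _ _)
    (fun i _ hy => ellipticMode_fst_bounds (hK i) (abs_lt.2 hy).le) (abs_lt.1 hη)

theorem deriv_deriv_tsum_ellipticMode_snd (hK : ∀ i, 1 ≤ K i)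
    (hu : Summable fun i => K i ^ 2 * ((|a i| + |d i|) * exp (K i * r)))
    {η : ℝ} (hη : |η| ≤ r) (φ : ℝ) :
    deriv (deriv fun y => ∑' i, ellipticMode (a i) (d i) (K i) η y) φ
      = -∑' i, K i ^ 2 * ellipticMode (a i) (d i) (K i) η φ := by
  rw [← tsum_neg]
  exact deriv_deriv_tsum_of_isPreconnected hu isOpen_univ isPreconnected_univ
    (fun _ _ _ => hasDerivAt_ellipticMode_snd _ _ _ _ _)
    (fun _ _ _ => hasDerivAt_ellipticMode_snd_deriv _ _ _ _ _)
    (fun i _ _ => ellipticMode_snd_bounds (hK i) hη) (Set.mem_univ φ)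

end series

theorem elliptic_series_harmonic_general
    (ηhat : ℝ)
    (h : ℝ → ℝ)
    (hint : IntervalIntegrable h MeasureTheory.volume 0 (2 * π))
    (A D : ℕ → ℝ)
    (hA : ∀ k : ℕ, 1 ≤ k → A k =
      (1 / (π * Real.cosh (k * ηhat))) * ∫ τ in (0 : ℝ)..(2 * π), h τ * Real.cos (k * τ))
    (hD : ∀ k : ℕ, 1 ≤ k → D k =
      (1 / (π * Real.sinh (k * ηhat))) * ∫ τ in (0 : ℝ)..(2 * π), h τ * Real.sin (k * τ))
    (g : ℝ → ℝ → ℝ)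
    (hg : ∀ η φ : ℝ, g η φ = A 0 / 2 + ∑' k : ℕ,
      (A (k + 1) * Real.cosh (((k : ℝ) + 1) * η) * Real.cos (((k : ℝ) + 1) * φ)
        + D (k + 1) * Real.sinh (((k : ℝ) + 1) * η) * Real.sin (((k : ℝ) + 1) * φ)))
    (η φ : ℝ) (hη : |η| < ηhat) :
    deriv (fun η' => deriv (fun η'' => g η'' φ) η') η
      + deriv (fun φ' => deriv (fun φ'' => g η φ'') φ') φ = 0 := by
  obtain ⟨r, hηr, hrη⟩ := exists_between hη
  have hK : ∀ k : ℕ, 1 ≤ (k : ℝ) + 1 := fun k => le_add_of_nonneg_left k.cast_nonneg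
  have hcoeff : ∀ k : ℕ, |A (k + 1)| + |D (k + 1)|
      ≤ (∫ τ in (0 : ℝ)..(2 * π), |h τ|) / π * (2 + 2 / (1 - exp (-(2 * ηhat))))
        * exp (-(((k : ℝ) + 1) * ηhat)) := fun k =>
    abs_add_abs_le_of_eq_fourier_coeff hint ((abs_nonneg η).trans_lt hη) (hK k)
      (by exact_mod_cast hA (k + 1) k.succ_pos) (by exact_mod_cast hD (k + 1) k.succ_pos)
  have hu := summable_sq_mul_mul_exp (fun k => by positivity) hcoeff hrη
  have hgη : (fun y => g y φ)
      = fun y => A 0 / 2 + ∑' k : ℕ,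
        ellipticMode (A (k + 1)) (D (k + 1)) ((k : ℝ) + 1) y φ :=
    funext fun y => hg y φ
  have hgφ : (fun y => g η y)
      = fun y => A 0 / 2 + ∑' k : ℕ,
        ellipticMode (A (k + 1)) (D (k + 1)) ((k : ℝ) + 1) η y :=
    funext fun y => hg η y
  rw [hgη, hgφ, deriv_const_add', deriv_const_add', deriv_deriv_tsum_ellipticMode_fst hK hu hηr,
    deriv_deriv_tsum_ellipticMode_snd hK hu hηr.le, add_neg_cancel]

/-- the elliptic-coordinate Fourier series solution of the
Dirichlet problem satisfies the Laplace equation for `|η| < η̂`. -/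
theorem elliptic_series_harmonic
    (q : ℝ) (hq0 : 0 < q) (hq1 : q < 1)
    (ηhat : ℝ) (hηhat : ηhat = -Real.log q)
    (h : ℝ → ℝ) (hper : Function.Periodic h (2 * π))
    (hint : IntervalIntegrable h MeasureTheory.volume 0 (2 * π))
    (A D : ℕ → ℝ)
    (hA0 : A 0 = (1 / π) * ∫ τ in (0 : ℝ)..(2 * π), h τ)
    (hA : ∀ k : ℕ, 1 ≤ k → A k =
      (1 / (π * Real.cosh (k * ηhat))) * ∫ τ in (0 : ℝ)..(2 * π), h τ * Real.cos (k * τ))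
    (hD : ∀ k : ℕ, 1 ≤ k → D k =
      (1 / (π * Real.sinh (k * ηhat))) * ∫ τ in (0 : ℝ)..(2 * π), h τ * Real.sin (k * τ))
    (g : ℝ → ℝ → ℝ)
    (hg : ∀ η φ : ℝ, g η φ = A 0 / 2 + ∑' k : ℕ,
      (A (k + 1) * Real.cosh (((k : ℝ) + 1) * η) * Real.cos (((k : ℝ) + 1) * φ)
        + D (k + 1) * Real.sinh (((k : ℝ) + 1) * η) * Real.sin (((k : ℝ) + 1) * φ)))
    (η φ : ℝ) (hη : |η| < ηhat) :
    deriv (fun η' => deriv (fun η'' => g η'' φ) η') η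
      + deriv (fun φ' => deriv (fun φ'' => g η φ'') φ') φ = 0 :=
  elliptic_series_harmonic_general ηhat h hint A D hA hD g hg η φ hη
end
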